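/- arXiv:1903.11830 — 8 statements merged into one kernel-verified Lean document; each statement's English description precedes it below -/
import Mathlib

section
/- Let μ, ν ∈ ℝ with ν > 0, and let κ : ℝ → ℝ be a differentiable function satisfying κ'(x)² + (1/4)·κ(x)⁴ + (μ − 1)·κ(x)² + ν = 0 for all x ∈ ℝ. Then κ(x)² < 4 − 4μ for all x ∈ ℝ. -/
/-- If κ satisfies the elastica first integral
κ'² + (1/4)κ⁴ + (μ−1)κ² + ν = 0 with ν > 0, then κ² < 4 − 4μ pointwise. -/
theorem elastica_curvature_bound
    (μ ν : ℝ) (hν : 0 < ν) (κ : ℝ → ℝ) (hκ : Differentiable ℝ κ)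
    (hint : ∀ x, (deriv κ x) ^ 2 + (1 / 4) * (κ x) ^ 4 + (μ - 1) * (κ x) ^ 2 + ν = 0) :
    ∀ x, (κ x) ^ 2 < 4 - 4 * μ := by
  intro x
  by_contra h
  push_neg at h
  nlinarith [hint x, sq_nonneg (deriv κ x), sq_nonneg (κ x),
    mul_nonneg (sq_nonneg (κ x)) (sub_nonneg.mpr h)]
end

section
/- Let b > 0, β ∈ ℝ, let κ : ℝ → ℝ be a continuous 2πb-periodic function, let l ≥ 1 be an integer, and let f : ℝ → ℝ be a C² 2πb-periodic function. Set φ(x,y) = f(x)·sin(l·y). Then ∫₀^{2πb} ∫₀^{2π} (Q̃φ)(x,y)·φ(x,y) dy dx = π·∫₀^{2πb} ( l⁴/4 − (κ(x)²/8 + 1/2 − β/2)·l² )·f(x)² dx + (π·l²/2)·∫₀^{2πb} f'(x)² dx. -/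
/-!
Every `y`-derivative of `f x * sin (l * y)` is again a multiple of `sin (l * y)`, so for fixed `x`
the `y`-integral only involves `∫ sin (l * y) ^ 2 = π`. What is left of the mixed term is
`-(π l² / 2) ∫ f f''`, and since `f` and `f'` are periodic, integrating by parts turns it into
`(π l² / 2) ∫ f' ^ 2`.
-/

open Real intervalIntegral

theorem deriv_const_mul_sin_mul (a c : ℝ) :
    deriv (fun y => a * sin (c * y)) = fun y => a * c * cos (c * y) := by
  funext y
  exact (((hasDerivAt_sin (c * y)).comp y ((hasDerivAt_id y).const_mul c)).const_mul a).deriv.trans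
    (by ring)

theorem deriv_const_mul_cos_mul (a c : ℝ) :
    deriv (fun y => a * cos (c * y)) = fun y => -(a * c) * sin (c * y) := by
  funext y
  exact (((hasDerivAt_cos (c * y)).comp y ((hasDerivAt_id y).const_mul c)).const_mul a).deriv.trans
    (by ring)

theorem deriv_deriv_const_mul_sin_mul (a c : ℝ) :
    deriv (deriv fun y => a * sin (c * y)) = fun y => -c ^ 2 * a * sin (c * y) := by
  rw [deriv_const_mul_sin_mul, deriv_const_mul_cos_mul]
  ring_nf

theorem integral_sin_int_mul_sq {l : ℤ} (hl : l ≠ 0) :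
    ∫ y in (0 : ℝ)..2 * π, sin (l * y) ^ 2 = π := by
  have hl' : (l : ℝ) ≠ 0 := Int.cast_ne_zero.mpr hl
  have hsin : sin (l * (2 * π)) = 0 := by
    simpa [mul_comm, mul_left_comm, mul_assoc] using sin_int_mul_pi (2 * l)
  rw [integral_comp_mul_left (fun y => sin y ^ 2) hl', integral_sin_sq, hsin]
  simp
  field_simp

theorem Function.Periodic.deriv {𝕜 F : Type*} [NontriviallyNormedField 𝕜] [NormedAddCommGroup F]
    [NormedSpace 𝕜 F] {f : 𝕜 → F} {T : 𝕜} (hf : Function.Periodic f T) :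
    Function.Periodic (deriv f) T := fun x => by
  rw [← deriv_comp_add_const, show (fun x => f (x + T)) = f from funext hf]

theorem integral_mul_deriv_deriv_of_periodic {f : ℝ → ℝ} {T : ℝ}
    (hT : Function.Periodic f T) (hf : ContDiff ℝ 2 f) :
    ∫ x in (0 : ℝ)..T, f x * deriv (deriv f) x = -∫ x in (0 : ℝ)..T, deriv f x ^ 2 := by
  obtain ⟨hf₁, -, hf'⟩ := contDiff_succ_iff_deriv.mp (show ContDiff ℝ (1 + 1) f from hf)
  have hf'' := hf'.continuous_deriv le_rfl
  have hfT : f T = f 0 := by simpa using hT 0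
  have hf'T : deriv f T = deriv f 0 := by simpa using hT.deriv 0
  rw [integral_mul_deriv_eq_deriv_mul (fun x _ => (hf₁ x).hasDerivAt)
      (fun x _ => (hf'.differentiable one_ne_zero x).hasDerivAt)
      (hf'.continuous.intervalIntegrable _ _) (hf''.intervalIntegrable _ _), hfT, hf'T]
  simp [sq]

theorem integral_quadraticForm_sin_mode (c : ℝ) {l : ℤ} (hl : l ≠ 0) (f : ℝ → ℝ) (x : ℝ) :
    ∫ y in (0 : ℝ)..2 * π,
      (c * deriv (deriv fun y => f x * sin (l * y)) y
        + 1 / 4 * deriv (deriv (deriv (deriv fun y => f x * sin (l * y)))) y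
        + 1 / 2 * deriv (deriv fun x' => deriv (deriv fun y => f x' * sin (l * y)) y) x)
        * (f x * sin (l * y))
      = π * (((l : ℝ) ^ 4 / 4 - c * (l : ℝ) ^ 2) * f x ^ 2)
        - π * (l : ℝ) ^ 2 / 2 * (f x * deriv (deriv f) x) := by
  simp only [deriv_deriv_const_mul_sin_mul]
  simp only [deriv_mul_const_field', deriv_const_mul_field']
  rw [integral_congr (g := fun y => (((l : ℝ) ^ 4 / 4 - c * (l : ℝ) ^ 2) * f x ^ 2
      - (l : ℝ) ^ 2 / 2 * (f x * deriv (deriv f) x)) * sin (l * y) ^ 2) fun y _ => by ring,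
    integral_const_mul, integral_sin_int_mul_sq hl]
  ring

theorem quadratic_form_on_fourier_mode_general
    (b : ℝ) (β : ℝ)
    (κ : ℝ → ℝ) (hκcont : Continuous κ)
    (l : ℤ) (hl : 1 ≤ l)
    (f : ℝ → ℝ) (hf : ContDiff ℝ 2 f) (hfper : Function.Periodic f (2 * π * b))
    (φ : ℝ → ℝ → ℝ) (hφ : ∀ x y, φ x y = f x * Real.sin (l * y)) :
    (∫ x in (0:ℝ)..(2 * π * b), ∫ y in (0:ℝ)..(2 * π),
        (((κ x) ^ 2 / 8 + 1 / 2 - β / 2) * deriv (deriv (φ x)) y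
          + (1 / 4) * deriv (deriv (deriv (deriv (φ x)))) y
          + (1 / 2) * deriv (deriv (fun x' => deriv (deriv (φ x')) y)) x) * φ x y)
    = π * (∫ x in (0:ℝ)..(2 * π * b),
        ((l : ℝ) ^ 4 / 4 - ((κ x) ^ 2 / 8 + 1 / 2 - β / 2) * (l : ℝ) ^ 2) * (f x) ^ 2)
      + (π * (l : ℝ) ^ 2 / 2) * ∫ x in (0:ℝ)..(2 * π * b), (deriv f x) ^ 2 := by
  obtain rfl : φ = fun x y => f x * sin (l * y) := funext fun x => funext (hφ x)
  have hfc : Continuous f := hf.continuous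
  have hf''c : Continuous (deriv (deriv f)) := (hf.iterate_deriv' 0 2).continuous
  rw [integral_congr fun x _ =>
      integral_quadraticForm_sin_mode (κ x ^ 2 / 8 + 1 / 2 - β / 2) (by omega) f x,
    integral_sub (by apply Continuous.intervalIntegrable; fun_prop)
      (by apply Continuous.intervalIntegrable; fun_prop),
    integral_const_mul, integral_const_mul, integral_mul_deriv_deriv_of_periodic hfper hf]
  ring

/-- The quadratic form of the operator
Q̃(φ) = (κ²/8 + 1/2 − β/2)·∂²φ/∂y² + (1/4)·∂⁴φ/∂y⁴ + (1/2)·∂⁴φ/∂x²∂y²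
evaluated on the single Fourier mode φ(x,y) = f(x)·sin(l·y). -/
theorem quadratic_form_on_fourier_mode
    (b : ℝ) (hb : 0 < b) (β : ℝ)
    (κ : ℝ → ℝ) (hκcont : Continuous κ) (hκper : Function.Periodic κ (2 * π * b))
    (l : ℤ) (hl : 1 ≤ l)
    (f : ℝ → ℝ) (hf : ContDiff ℝ 2 f) (hfper : Function.Periodic f (2 * π * b))
    (φ : ℝ → ℝ → ℝ) (hφ : ∀ x y, φ x y = f x * Real.sin (l * y)) :
    (∫ x in (0:ℝ)..(2 * π * b), ∫ y in (0:ℝ)..(2 * π),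
        (((κ x) ^ 2 / 8 + 1 / 2 - β / 2) * deriv (deriv (φ x)) y
          + (1 / 4) * deriv (deriv (deriv (deriv (φ x)))) y
          + (1 / 2) * deriv (deriv (fun x' => deriv (deriv (φ x')) y)) x) * φ x y)
    = π * (∫ x in (0:ℝ)..(2 * π * b),
        ((l : ℝ) ^ 4 / 4 - ((κ x) ^ 2 / 8 + 1 / 2 - β / 2) * (l : ℝ) ^ 2) * (f x) ^ 2)
      + (π * (l : ℝ) ^ 2 / 2) * ∫ x in (0:ℝ)..(2 * π * b), (deriv f x) ^ 2 :=
  quadratic_form_on_fourier_mode_general b β κ hκcont l hl f hf hfper φ hφ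
end

section
/- Let b > 0, β > 0, let κ : ℝ → ℝ be a continuous function with κ(x)² < 4 + 4β for all x, let l ≥ 2 be an integer, and let f : ℝ → ℝ be a C¹ 2πb-periodic function that is not identically zero. Then ∫₀^{2πb} [ ( l⁴/4 − (κ(x)²/8 + 1/2 − β/2)·l² )·f(x)² + (l²/2)·f'(x)² ] dx > 0. -/
open Real intervalIntegral

/-- Auxiliary: a continuous nonnegative function positive at a point of `[0, T)`
has positive integral over `[0, T]`. -/
lemma integral_pos_of_cont_nonneg {g : ℝ → ℝ} {T y : ℝ} (hTpos : 0 < T)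
    (hgcont : Continuous g) (hgnonneg : ∀ x, 0 ≤ g x)
    (hy0 : 0 ≤ y) (hyT : y < T) (hgy : 0 < g y) :
    0 < ∫ x in (0:ℝ)..T, g x := by
  have hgi : IntervalIntegrable g MeasureTheory.volume 0 T :=
    hgcont.intervalIntegrable 0 T
  rw [intervalIntegral.integral_pos_iff_support_of_nonneg_ae
      (Filter.Eventually.of_forall hgnonneg) hgi]
  refine ⟨hTpos, ?_⟩
  have hU : IsOpen {z : ℝ | 0 < g z} := isOpen_lt continuous_const hgcont
  obtain ⟨ε, hε, hball⟩ := Metric.isOpen_iff.mp hU y hgy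
  have hmin : 0 < min ε (T - y) := lt_min hε (by linarith)
  set p : ℝ := y + min ε (T - y) / 2 with hp
  have hpball : p ∈ Metric.ball y ε := by
    rw [Metric.mem_ball, Real.dist_eq, hp]
    have h1 : |min ε (T - y) / 2| = min ε (T - y) / 2 := abs_of_pos (by linarith)
    simp only [add_sub_cancel_left]
    rw [h1]
    have := min_le_left ε (T - y)
    linarith
  have hgp : 0 < g p := hball hpball
  have hminT := min_le_right ε (T - y)
  have hpIoo : p ∈ {z : ℝ | 0 < g z} ∩ Set.Ioo 0 T := by
    refine ⟨hgp, ?_, ?_⟩ <;> rw [hp] <;> linarith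
  have hopen : IsOpen ({z : ℝ | 0 < g z} ∩ Set.Ioo 0 T) := hU.inter isOpen_Ioo
  have hsub : {z : ℝ | 0 < g z} ∩ Set.Ioo 0 T ⊆ Function.support g ∩ Set.Ioc 0 T := by
    rintro z ⟨hz1, hz2⟩
    exact ⟨ne_of_gt hz1, hz2.1, le_of_lt hz2.2⟩
  exact lt_of_lt_of_le (hopen.measure_pos _ ⟨p, hpIoo⟩) (MeasureTheory.measure_mono hsub)

/-- Positivity of the quadratic form of Q̃ on Fourier modes of
frequency l ≥ 2 in y, given the pointwise curvature bound κ² < 4 + 4β. -/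
theorem quadratic_form_positive
    (b : ℝ) (hb : 0 < b) (β : ℝ) (hβ : 0 < β)
    (κ : ℝ → ℝ) (hκcont : Continuous κ) (hκbound : ∀ x, (κ x) ^ 2 < 4 + 4 * β)
    (l : ℤ) (hl : 2 ≤ l)
    (f : ℝ → ℝ) (hf : ContDiff ℝ 1 f) (hfper : Function.Periodic f (2 * π * b))
    (hfne : ¬ (∀ x, f x = 0)) :
    0 < ∫ x in (0:ℝ)..(2 * π * b),
        (((l : ℝ) ^ 4 / 4 - ((κ x) ^ 2 / 8 + 1 / 2 - β / 2) * (l : ℝ) ^ 2) * (f x) ^ 2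
          + ((l : ℝ) ^ 2 / 2) * (deriv f x) ^ 2) := by
  have hTpos : 0 < 2 * π * b := by positivity
  have hl' : (2 : ℝ) ≤ (l : ℝ) := by exact_mod_cast hl
  have hcpos : ∀ x, 0 < (l : ℝ) ^ 4 / 4 - ((κ x) ^ 2 / 8 + 1 / 2 - β / 2) * (l : ℝ) ^ 2 := by
    intro x
    have h1 := hκbound x
    nlinarith [sq_nonneg ((l:ℝ) - 2), sq_nonneg (l:ℝ), sq_nonneg ((l:ℝ)^2 - 4)]
  have hgnonneg : ∀ x, 0 ≤ ((l : ℝ) ^ 4 / 4 - ((κ x) ^ 2 / 8 + 1 / 2 - β / 2) * (l : ℝ) ^ 2) * (f x) ^ 2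
          + ((l : ℝ) ^ 2 / 2) * (deriv f x) ^ 2 := by
    intro x
    have h1 := mul_nonneg (hcpos x).le (sq_nonneg (f x))
    have h2 : (0:ℝ) ≤ ((l : ℝ) ^ 2 / 2) * (deriv f x) ^ 2 := by positivity
    linarith
  have hderiv_cont : Continuous (deriv f) := hf.continuous_deriv le_rfl
  have hgcont : Continuous (fun x => ((l : ℝ) ^ 4 / 4 - ((κ x) ^ 2 / 8 + 1 / 2 - β / 2) * (l : ℝ) ^ 2) * (f x) ^ 2
          + ((l : ℝ) ^ 2 / 2) * (deriv f x) ^ 2) := by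
    apply Continuous.add
    · exact (continuous_const.sub (((hκcont.pow 2).div_const 8 |>.add continuous_const
        |>.sub continuous_const).mul continuous_const)).mul (hf.continuous.pow 2)
    · exact continuous_const.mul (hderiv_cont.pow 2)
  -- find a point in [0, T) where f ≠ 0
  obtain ⟨x, hx⟩ := not_forall.mp hfne
  have hy0 : 0 ≤ x - ⌊x / (2 * π * b)⌋ * (2 * π * b) :=
    Int.sub_floor_div_mul_nonneg x hTpos
  have hyT : x - ⌊x / (2 * π * b)⌋ * (2 * π * b) < 2 * π * b :=
    Int.sub_floor_div_mul_lt x hTpos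
  have hfy : f (x - ⌊x / (2 * π * b)⌋ * (2 * π * b)) ≠ 0 := by
    rw [hfper.sub_int_mul_eq]; exact hx
  refine integral_pos_of_cont_nonneg hTpos hgcont hgnonneg hy0 hyT ?_
  have hc := hcpos (x - ⌊x / (2 * π * b)⌋ * (2 * π * b))
  have hfy2 : 0 < (f (x - ⌊x / (2 * π * b)⌋ * (2 * π * b))) ^ 2 := by positivity
  have h1 := mul_pos hc hfy2
  have h2 : (0:ℝ) ≤ ((l : ℝ) ^ 2 / 2) * (deriv f (x - ⌊x / (2 * π * b)⌋ * (2 * π * b))) ^ 2 := by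
    positivity
  linarith
end

section
/- Let u, v : ℝ → ℝ be C² with v > 0 and u'² + v'² = v² everywhere, and let κ : ℝ → ℝ satisfy u'' = −v'κ + 2u'v'/v and v'' = u'κ − (u'² − v'²)/v. Let φ : ℝ² → ℝ be such that x ↦ φ(x,y₀) is differentiable, and fix (x₀, y₀) ∈ ℝ². Define E : ℝ → ℝ by E(t) = [ (u'(x₀) − t·A)² + (v'(x₀) + t·B)² ] / (v(x₀) + t·u'(x₀)·φ(x₀,y₀))², where A = v''(x₀)·φ(x₀,y₀) + v'(x₀)·∂φ/∂x(x₀,y₀) and B = u''(x₀)·φ(x₀,y₀) + u'(x₀)·∂φ/∂x(x₀,y₀). Then E(0) = 1 and E'(0) = −2·κ(x₀)·φ(x₀,y₀). -/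
/-!
Since `(u', v')` has hyperbolic length one, `E 0 = (u'² + v'²) / v² = 1`. Differentiating the
quotient at `t = 0`, the `∂φ/∂x` terms cancel in `v'·B − u'·A = φ (v'u'' − u'v'')`, and the
geodesic curvature equations turn `v'u'' − u'v''` into `u'v − κv²`; the `u'` contributions of
numerator and denominator then cancel, leaving `−2κφ`.
-/

lemma curvature_mul_sq_eq {u v κ : ℝ → ℝ} {x : ℝ} (hv : v x ≠ 0)
    (harc : (deriv u x) ^ 2 + (deriv v x) ^ 2 = (v x) ^ 2)
    (hu'' : deriv (deriv u) x = -(deriv v x) * κ x + 2 * deriv u x * deriv v x / v x)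
    (hv'' : deriv (deriv v) x =
      deriv u x * κ x - ((deriv u x) ^ 2 - (deriv v x) ^ 2) / v x) :
    κ x * v x ^ 2 =
      deriv u x * deriv (deriv v) x - deriv v x * deriv (deriv u) x + deriv u x * v x := by
  rw [hu'', hv'']
  field_simp
  linear_combination (-κ x * v x + deriv u x) * harc

lemma hasDerivAt_sq_add_sq_div_sq_zero (a b w A B c : ℝ) (hw : w ≠ 0) :
    HasDerivAt (fun t => ((a - t * A) ^ 2 + (b + t * B) ^ 2) / (w + t * c) ^ 2)
      (2 * ((b * B - a * A) * w - (a ^ 2 + b ^ 2) * c) / w ^ 3) 0 := by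
  have hnum := (((hasDerivAt_mul_const (x := 0) A).const_sub a).fun_pow 2).fun_add
    (((hasDerivAt_mul_const (x := 0) B).const_add b).fun_pow 2)
  have hden := ((hasDerivAt_mul_const (x := 0) c).const_add w).fun_pow 2
  refine (hnum.fun_div hden (by simpa using hw)).congr_deriv ?_
  norm_num
  field_simp
  ring

theorem metric_coefficient_first_order_general
    (u v κ : ℝ → ℝ) (φ : ℝ → ℝ → ℝ) (x₀ y₀ : ℝ)
    (hvpos : ∀ x, 0 < v x)
    (harc : ∀ x, (deriv u x) ^ 2 + (deriv v x) ^ 2 = (v x) ^ 2)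
    (hu'' : ∀ x, deriv (deriv u) x = -(deriv v x) * κ x + 2 * deriv u x * deriv v x / v x)
    (hv'' : ∀ x, deriv (deriv v) x =
      deriv u x * κ x - ((deriv u x) ^ 2 - (deriv v x) ^ 2) / v x)
    (A B : ℝ)
    (hA : A = deriv (deriv v) x₀ * φ x₀ y₀ + deriv v x₀ * deriv (fun x => φ x y₀) x₀)
    (hB : B = deriv (deriv u) x₀ * φ x₀ y₀ + deriv u x₀ * deriv (fun x => φ x y₀) x₀)
    (E : ℝ → ℝ)
    (hE : ∀ t, E t = ((deriv u x₀ - t * A) ^ 2 + (deriv v x₀ + t * B) ^ 2)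
        / (v x₀ + t * deriv u x₀ * φ x₀ y₀) ^ 2) :
    E 0 = 1 ∧ deriv E 0 = -2 * κ x₀ * φ x₀ y₀ := by
  have hv : v x₀ ≠ 0 := (hvpos x₀).ne'
  constructor
  · rw [hE]
    simp only [zero_mul, sub_zero, add_zero]
    rw [harc, div_self (pow_ne_zero 2 hv)]
  · have hκ := curvature_mul_sq_eq hv (harc x₀) (hu'' x₀) (hv'' x₀)
    have hEfun : E = fun t => ((deriv u x₀ - t * A) ^ 2 + (deriv v x₀ + t * B) ^ 2)
        / (v x₀ + t * (deriv u x₀ * φ x₀ y₀)) ^ 2 := by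
      funext t
      rw [hE, mul_assoc]
    rw [hEfun, (hasDerivAt_sq_add_sq_div_sq_zero _ _ _ _ _ _ hv).deriv, harc, hA, hB]
    field_simp
    linear_combination φ x₀ y₀ * hκ

/-- For the normal variation of the profile curve, the dx⊗dx
metric coefficient E(t) satisfies E(0) = 1 and E'(0) = −2κφ. -/
theorem metric_coefficient_first_order
    (u v κ : ℝ → ℝ) (φ : ℝ → ℝ → ℝ) (x₀ y₀ : ℝ)
    (hu : ContDiff ℝ 2 u) (hv : ContDiff ℝ 2 v)
    (hvpos : ∀ x, 0 < v x)
    (harc : ∀ x, (deriv u x) ^ 2 + (deriv v x) ^ 2 = (v x) ^ 2)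
    (hu'' : ∀ x, deriv (deriv u) x = -(deriv v x) * κ x + 2 * deriv u x * deriv v x / v x)
    (hv'' : ∀ x, deriv (deriv v) x =
      deriv u x * κ x - ((deriv u x) ^ 2 - (deriv v x) ^ 2) / v x)
    (hφ : Differentiable ℝ (fun x => φ x y₀))
    (A B : ℝ)
    (hA : A = deriv (deriv v) x₀ * φ x₀ y₀ + deriv v x₀ * deriv (fun x => φ x y₀) x₀)
    (hB : B = deriv (deriv u) x₀ * φ x₀ y₀ + deriv u x₀ * deriv (fun x => φ x y₀) x₀)
    (E : ℝ → ℝ)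
    (hE : ∀ t, E t = ((deriv u x₀ - t * A) ^ 2 + (deriv v x₀ + t * B) ^ 2)
        / (v x₀ + t * deriv u x₀ * φ x₀ y₀) ^ 2) :
    E 0 = 1 ∧ deriv E 0 = -2 * κ x₀ * φ x₀ y₀ :=
  metric_coefficient_first_order_general u v κ φ x₀ y₀ hvpos harc hu'' hv'' A B hA hB E hE
end

section
/- Let u, v : ℝ → ℝ be C² with v > 0 and u'² + v'² = v² everywhere, and let κ : ℝ → ℝ satisfy u'' = −v'κ + 2u'v'/v and v'' = u'κ − (u'² − v'²)/v. Let φ : ℝ² → ℝ be such that x ↦ φ(x,y₀) is differentiable, and fix (x₀, y₀) ∈ ℝ². Define E : ℝ → ℝ by E(t) = [ (u'(x₀) − t·A)² + (v'(x₀) + t·B)² ] / (v(x₀) + t·u'(x₀)·φ(x₀,y₀))², where A = v''(x₀)·φ(x₀,y₀) + v'(x₀)·∂φ/∂x(x₀,y₀) and B = u''(x₀)·φ(x₀,y₀) + u'(x₀)·∂φ/∂x(x₀,y₀). Then, writing φ = φ(x₀,y₀), φ_x = ∂φ/∂x(x₀,y₀), and evaluating u', v', v, κ at x₀: E''(0)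 = 2·[ φ_x² + κ²φ² + (v'²/v²)·φ² + (2/v)·(κ·u'·φ² + v'·φ·φ_x) ]. -/
/-!
`E(t)` is `|w - t z|² / (c + t d)²` with `w = (u', v')`, `z = (A, -B)`, `c = v`, `d = u'φ`, so
`E''(0) = 2|z|²/c² + 8d⟨w, z⟩/c³ + 6d²|w|²/c⁴` by the quotient rule. Substituting the geodesic
curvature equations for `u''`, `v''` in `A`, `B` and using `|w|² = u'² + v'² = v²` gives the claim.
-/

open Filter Topology

theorem deriv_deriv_div {𝕜 : Type*} [NontriviallyNormedField 𝕜] {f f' g g' : 𝕜 → 𝕜}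
    {f'' g'' x : 𝕜} (hf : ∀ t, HasDerivAt f (f' t) t) (hg : ∀ t, HasDerivAt g (g' t) t)
    (hf' : HasDerivAt f' f'' x) (hg' : HasDerivAt g' g'' x) (hgx : g x ≠ 0) :
    deriv (deriv fun t => f t / g t) x =
      (f'' * g x ^ 2 - (2 * f' x * g' x + f x * g'') * g x + 2 * f x * g' x ^ 2) / g x ^ 3 := by
  have hg_ne : ∀ᶠ t in 𝓝 x, g t ≠ 0 := (hg x).continuousAt.eventually_ne hgx
  have hfirst : deriv (fun t => f t / g t) =ᶠ[𝓝 x] fun t => (f' t * g t - f t * g' t) / g t ^ 2 :=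
    hg_ne.mono fun t ht => ((hf t).div (hg t) ht).deriv
  rw [hfirst.deriv_eq]
  refine (((hf'.mul (hg x)).sub ((hf x).mul hg')).div ((hg x).pow 2)
    (pow_ne_zero 2 hgx)).deriv.trans ?_
  simp only [Pi.pow_apply, Pi.mul_apply, Pi.sub_apply]
  field_simp
  ring

theorem hasDerivAt_add_mul (a b t : ℝ) : HasDerivAt (fun s => a + s * b) b t := by
  simpa using ((hasDerivAt_id t).mul_const b).const_add a

theorem deriv_deriv_sum_sq_div_sq (p q c d A B : ℝ) (hc : c ≠ 0) :
    deriv (deriv fun t => ((p - t * A) ^ 2 + (q + t * B) ^ 2) / (c + t * d) ^ 2) 0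
      = 2 * (A ^ 2 + B ^ 2) / c ^ 2 - 8 * d * (q * B - p * A) / c ^ 3
        + 6 * d ^ 2 * (p ^ 2 + q ^ 2) / c ^ 4 := by
  have hN (t : ℝ) : HasDerivAt (fun s => (p - s * A) ^ 2 + (q + s * B) ^ 2)
      (2 * (q + t * B) * B - 2 * (p - t * A) * A) t := by
    have h := ((hasDerivAt_add_mul p (-A) t).fun_pow 2).add ((hasDerivAt_add_mul q B t).fun_pow 2)
    simp only [mul_neg, ← sub_eq_add_neg] at h
    exact h.congr_deriv (by push_cast; ring)
  have hD (t : ℝ) : HasDerivAt (fun s => (c + s * d) ^ 2) (2 * (c + t * d) * d) t :=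
    ((hasDerivAt_add_mul c d t).fun_pow 2).congr_deriv (by push_cast; ring)
  have hN' : HasDerivAt (fun t => 2 * (q + t * B) * B - 2 * (p - t * A) * A)
      (2 * (A ^ 2 + B ^ 2)) 0 := by
    convert hasDerivAt_add_mul (2 * (q * B - p * A)) (2 * (A ^ 2 + B ^ 2)) 0 using 1
    ext s; ring
  have hD' : HasDerivAt (fun t => 2 * (c + t * d) * d) (2 * d ^ 2) 0 := by
    convert hasDerivAt_add_mul (2 * c * d) (2 * d ^ 2) 0 using 1
    ext s; ring
  rw [deriv_deriv_div hN hD hN' hD' (by simpa using hc)]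
  simp only [zero_mul, add_zero, sub_zero]
  field_simp
  ring

theorem metric_coefficient_second_order_general
    (u v κ : ℝ → ℝ) (φ : ℝ → ℝ → ℝ) (x₀ y₀ : ℝ)
    (hvpos : ∀ x, 0 < v x)
    (harc : ∀ x, (deriv u x) ^ 2 + (deriv v x) ^ 2 = (v x) ^ 2)
    (hu'' : ∀ x, deriv (deriv u) x = -(deriv v x) * κ x + 2 * deriv u x * deriv v x / v x)
    (hv'' : ∀ x, deriv (deriv v) x =
      deriv u x * κ x - ((deriv u x) ^ 2 - (deriv v x) ^ 2) / v x)
    (A B : ℝ)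
    (hA : A = deriv (deriv v) x₀ * φ x₀ y₀ + deriv v x₀ * deriv (fun x => φ x y₀) x₀)
    (hB : B = deriv (deriv u) x₀ * φ x₀ y₀ + deriv u x₀ * deriv (fun x => φ x y₀) x₀)
    (E : ℝ → ℝ)
    (hE : ∀ t, E t = ((deriv u x₀ - t * A) ^ 2 + (deriv v x₀ + t * B) ^ 2)
        / (v x₀ + t * deriv u x₀ * φ x₀ y₀) ^ 2) :
    deriv (deriv E) 0 =
      2 * ((deriv (fun x => φ x y₀) x₀) ^ 2
        + (κ x₀) ^ 2 * (φ x₀ y₀) ^ 2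
        + ((deriv v x₀) ^ 2 / (v x₀) ^ 2) * (φ x₀ y₀) ^ 2
        + (2 / v x₀) * (κ x₀ * deriv u x₀ * (φ x₀ y₀) ^ 2
            + deriv v x₀ * φ x₀ y₀ * deriv (fun x => φ x y₀) x₀)) := by
  have hE' : E = fun t => ((deriv u x₀ - t * A) ^ 2 + (deriv v x₀ + t * B) ^ 2)
      / (v x₀ + t * (deriv u x₀ * φ x₀ y₀)) ^ 2 := funext fun t => by rw [hE, mul_assoc]
  have hv₀ : v x₀ ≠ 0 := (hvpos x₀).ne'
  rw [hE', deriv_deriv_sum_sq_div_sq _ _ _ _ _ _ hv₀, hA, hB, hu'' x₀, hv'' x₀]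
  field_simp
  linear_combination (2 * (v x₀ * deriv (fun x => φ x y₀) x₀ + deriv v x₀ * φ x₀ y₀) ^ 2
    + 2 * v x₀ ^ 2 * κ x₀ ^ 2 * φ x₀ y₀ ^ 2 + 4 * deriv u x₀ * v x₀ * κ x₀ * φ x₀ y₀ ^ 2) * harc x₀

/-- For the normal variation of the profile curve, the dx⊗dx
metric coefficient E(t) has second derivative at t = 0 equal to
2·[φ_x² + κ²φ² + (v'²/v²)φ² + (2/v)(κu'φ² + v'φφ_x)]. -/
theorem metric_coefficient_second_order
    (u v κ : ℝ → ℝ) (φ : ℝ → ℝ → ℝ) (x₀ y₀ : ℝ)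
    (hu : ContDiff ℝ 2 u) (hv : ContDiff ℝ 2 v)
    (hvpos : ∀ x, 0 < v x)
    (harc : ∀ x, (deriv u x) ^ 2 + (deriv v x) ^ 2 = (v x) ^ 2)
    (hu'' : ∀ x, deriv (deriv u) x = -(deriv v x) * κ x + 2 * deriv u x * deriv v x / v x)
    (hv'' : ∀ x, deriv (deriv v) x =
      deriv u x * κ x - ((deriv u x) ^ 2 - (deriv v x) ^ 2) / v x)
    (hφ : Differentiable ℝ (fun x => φ x y₀))
    (A B : ℝ)
    (hA : A = deriv (deriv v) x₀ * φ x₀ y₀ + deriv v x₀ * deriv (fun x => φ x y₀) x₀)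
    (hB : B = deriv (deriv u) x₀ * φ x₀ y₀ + deriv u x₀ * deriv (fun x => φ x y₀) x₀)
    (E : ℝ → ℝ)
    (hE : ∀ t, E t = ((deriv u x₀ - t * A) ^ 2 + (deriv v x₀ + t * B) ^ 2)
        / (v x₀ + t * deriv u x₀ * φ x₀ y₀) ^ 2) :
    deriv (deriv E) 0 =
      2 * ((deriv (fun x => φ x y₀) x₀) ^ 2
        + (κ x₀) ^ 2 * (φ x₀ y₀) ^ 2
        + ((deriv v x₀) ^ 2 / (v x₀) ^ 2) * (φ x₀ y₀) ^ 2
        + (2 / v x₀) * (κ x₀ * deriv u x₀ * (φ x₀ y₀) ^ 2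
            + deriv v x₀ * φ x₀ y₀ * deriv (fun x => φ x y₀) x₀)) :=
  metric_coefficient_second_order_general u v κ φ x₀ y₀ hvpos harc hu'' hv'' A B hA hB E hE
end

section
/- Let b > 0 and let S be a finite set of pairs (m,k) of integers with m ≥ 0 and k ≥ 1, with real coefficients a₁(m,k), a₂(m,k), a₃(m,k), a₄(m,k) for (m,k) ∈ S. Define α : ℝ² → ℝ by α(x,y) = Σ_{(m,k)∈S} [ a₁ cos(mx/b)cos(ky) + a₂ cos(mx/b)sin(ky) + a₃ sin(mx/b)cos(ky) + a₄ sin(mx/b)sin(ky) ], and ν : ℝ² → ℂ by ν(x,y) = Σ_{(m,k)∈S} (−i·k/(k² + (m/b)²))·[ a₁ cos(mx/b)sin(ky) − a₂ cos(mx/b)cos(ky) + a₃ sin(mx/b)sin(ky) − a₄ sin(mx/b)cos(ky) ], and set p = (1/2)·∂ν/∂x − (i/2)·∂ν/∂y. Then (1/2)·( ∂p/∂x + i·∂p/∂y ) = −(i/4)·∂α/∂y at every point of ℝ². -/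
open Real

/-! With `∂ = (∂ₓ - i ∂ᵧ)/2` one has `p = ∂ν`, and `∂̄∂ = Δ/4` because the mixed partials of a
trigonometric polynomial commute. The mode of frequency `(w, k) = (m/b, k)` is an eigenfunction of
`Δ` with eigenvalue `-(w² + k²)`, and the `ν`-mode is `i/(w² + k²)` times the `y`-derivative of the
`α`-mode, so `∂̄p = Δν/4 = -(i/4) ∂α/∂y`. -/

noncomputable def trigMode (w k a₁ a₂ a₃ a₄ x y : ℝ) : ℝ :=
  a₁ * cos (w * x) * cos (k * y) + a₂ * cos (w * x) * sin (k * y)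
    + a₃ * sin (w * x) * cos (k * y) + a₄ * sin (w * x) * sin (k * y)

theorem trigMode_neg (w k a₁ a₂ a₃ a₄ x y : ℝ) :
    trigMode w k (-a₁) (-a₂) (-a₃) (-a₄) x y = -trigMode w k a₁ a₂ a₃ a₄ x y := by
  simp only [trigMode]
  ring

theorem hasDerivAt_mul_cos_add_mul_sin (w A B t : ℝ) :
    HasDerivAt (fun t => A * cos (w * t) + B * sin (w * t))
      (w * (B * cos (w * t) - A * sin (w * t))) t := by
  have hwt : HasDerivAt (w * ·) w t := by simpa using (hasDerivAt_id' t).const_mul w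
  exact ((hwt.cos.const_mul A).fun_add (hwt.sin.const_mul B)).congr_deriv (by ring)

theorem hasDerivAt_trigMode_x (w k a₁ a₂ a₃ a₄ x y : ℝ) :
    HasDerivAt (fun x => trigMode w k a₁ a₂ a₃ a₄ x y)
      (w * trigMode w k a₃ a₄ (-a₁) (-a₂) x y) x := by
  convert hasDerivAt_mul_cos_add_mul_sin w (a₁ * cos (k * y) + a₂ * sin (k * y))
    (a₃ * cos (k * y) + a₄ * sin (k * y)) x using 1
  · funext x
    simp only [trigMode]
    ring
  · simp only [trigMode]
    ring

theorem hasDerivAt_trigMode_y (w k a₁ a₂ a₃ a₄ x y : ℝ) :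
    HasDerivAt (fun y => trigMode w k a₁ a₂ a₃ a₄ x y)
      (k * trigMode w k a₂ (-a₁) a₄ (-a₃) x y) y := by
  convert hasDerivAt_mul_cos_add_mul_sin k (a₁ * cos (w * x) + a₃ * sin (w * x))
    (a₂ * cos (w * x) + a₄ * sin (w * x)) y using 1
  · funext y
    simp only [trigMode]
    ring
  · simp only [trigMode]
    ring

theorem HasDerivAt.sum_mul_ofReal {ι : Type*} {S : Finset ι} (c : ι → ℂ) {g : ι → ℝ → ℝ}
    {g' : ι → ℝ} {t : ℝ} (h : ∀ q ∈ S, HasDerivAt (g q) (g' q) t) :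
    HasDerivAt (fun t => ∑ q ∈ S, c q * (g q t : ℂ)) (∑ q ∈ S, c q * (g' q : ℂ)) t :=
  HasDerivAt.fun_sum fun q hq => (h q hq).ofReal_comp.const_mul (c q)

theorem dbar_dz_eq_quarter_laplacian {f fx fy fxx fxy fyy p : ℝ → ℝ → ℂ}
    (hx : ∀ x y, HasDerivAt (f · y) (fx x y) x) (hy : ∀ x y, HasDerivAt (f x ·) (fy x y) y)
    (hxx : ∀ x y, HasDerivAt (fx · y) (fxx x y) x) (hxy : ∀ x y, HasDerivAt (fx x ·) (fxy x y) y)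
    (hyx : ∀ x y, HasDerivAt (fy · y) (fxy x y) x) (hyy : ∀ x y, HasDerivAt (fy x ·) (fyy x y) y)
    (hp : ∀ x y, p x y = (1 / 2) * deriv (f · y) x - (Complex.I / 2) * deriv (f x ·) y)
    (x y : ℝ) :
    (1 / 2) * (deriv (p · y) x + Complex.I * deriv (p x ·) y) = (1 / 4) * (fxx x y + fyy x y) := by
  have hp' : p = fun x y => (1 / 2) * fx x y - (Complex.I / 2) * fy x y := by
    funext x y
    rw [hp, (hx x y).deriv, (hy x y).deriv]
  subst hp'
  rw [(((hxx x y).const_mul _).fun_sub ((hyx x y).const_mul _)).deriv,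
    (((hxy x y).const_mul _).fun_sub ((hyy x y).const_mul _)).deriv]
  linear_combination (-(1 / 4) * fyy x y) * Complex.I_sq

theorem dbar_dz_sum_trigMode {ι : Type*} (S : Finset ι) (c : ι → ℂ) (w k a₁ a₂ a₃ a₄ : ι → ℝ)
    {ν p : ℝ → ℝ → ℂ}
    (hν : ∀ x y, ν x y = ∑ q ∈ S, c q * trigMode (w q) (k q) (a₁ q) (a₂ q) (a₃ q) (a₄ q) x y)
    (hp : ∀ x y, p x y = (1 / 2) * deriv (ν · y) x - (Complex.I / 2) * deriv (ν x ·) y)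
    (x y : ℝ) :
    (1 / 2) * (deriv (p · y) x + Complex.I * deriv (p x ·) y)
      = -(1 / 4) * ∑ q ∈ S,
          c q * ((w q ^ 2 + k q ^ 2) * trigMode (w q) (k q) (a₁ q) (a₂ q) (a₃ q) (a₄ q) x y : ℝ) := by
  obtain rfl : ν = fun x y => ∑ q ∈ S, c q * trigMode (w q) (k q) (a₁ q) (a₂ q) (a₃ q) (a₄ q) x y :=
    funext₂ hν
  have hx x y := HasDerivAt.sum_mul_ofReal (S := S) c fun q _ =>
    hasDerivAt_trigMode_x (w q) (k q) (a₁ q) (a₂ q) (a₃ q) (a₄ q) x y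
  have hy x y := HasDerivAt.sum_mul_ofReal (S := S) c fun q _ =>
    hasDerivAt_trigMode_y (w q) (k q) (a₁ q) (a₂ q) (a₃ q) (a₄ q) x y
  have hxx x y := HasDerivAt.sum_mul_ofReal (S := S) c fun q _ =>
    (hasDerivAt_trigMode_x (w q) (k q) (a₃ q) (a₄ q) (-a₁ q) (-a₂ q) x y).const_mul (w q)
  have hxy x y := HasDerivAt.sum_mul_ofReal (S := S) c fun q _ =>
    (hasDerivAt_trigMode_y (w q) (k q) (a₃ q) (a₄ q) (-a₁ q) (-a₂ q) x y).const_mul (w q)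
  have hyx x y := HasDerivAt.sum_mul_ofReal (S := S) c fun q _ =>
    (hasDerivAt_trigMode_x (w q) (k q) (a₂ q) (-a₁ q) (a₄ q) (-a₃ q) x y).const_mul (k q)
  have hyy x y := HasDerivAt.sum_mul_ofReal (S := S) c fun q _ =>
    (hasDerivAt_trigMode_y (w q) (k q) (a₂ q) (-a₁ q) (a₄ q) (-a₃ q) x y).const_mul (k q)
  rw [dbar_dz_eq_quarter_laplacian hx hy hxx hxy
    (fun x y => (hyx x y).congr_deriv (by simp only [mul_left_comm])) hyy hp x y,
    ← Finset.sum_add_distrib, Finset.mul_sum, Finset.mul_sum]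
  refine Finset.sum_congr rfl fun q _ => ?_
  simp only [trigMode_neg]
  push_cast
  ring

theorem ofReal_div_sq_add_sq_mul (k w : ℝ) :
    (k : ℂ) / ((k : ℂ) ^ 2 + (w : ℂ) ^ 2) * ((k : ℂ) ^ 2 + (w : ℂ) ^ 2) = k := by
  rcases eq_or_ne k 0 with rfl | hk
  · simp
  · have hden : ((k ^ 2 + w ^ 2 : ℝ) : ℂ) ≠ 0 := by exact_mod_cast (by positivity : k ^ 2 + w ^ 2 ≠ 0)
    push_cast at hden
    exact div_mul_cancel₀ _ hden

theorem dbar_equation_solution_general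
    (b : ℝ)
    (S : Finset (ℕ × ℕ))
    (a₁ a₂ a₃ a₄ : ℕ × ℕ → ℝ)
    (α : ℝ → ℝ → ℝ)
    (hα : ∀ x y, α x y = ∑ q ∈ S,
      (a₁ q * Real.cos (q.1 * x / b) * Real.cos (q.2 * y)
        + a₂ q * Real.cos (q.1 * x / b) * Real.sin (q.2 * y)
        + a₃ q * Real.sin (q.1 * x / b) * Real.cos (q.2 * y)
        + a₄ q * Real.sin (q.1 * x / b) * Real.sin (q.2 * y)))
    (ν : ℝ → ℝ → ℂ)
    (hν : ∀ x y, ν x y = ∑ q ∈ S,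
      (-Complex.I * (q.2 : ℝ) / ((q.2 : ℝ) ^ 2 + ((q.1 : ℝ) / b) ^ 2)) *
        ((a₁ q * Real.cos (q.1 * x / b) * Real.sin (q.2 * y)
          - a₂ q * Real.cos (q.1 * x / b) * Real.cos (q.2 * y)
          + a₃ q * Real.sin (q.1 * x / b) * Real.sin (q.2 * y)
          - a₄ q * Real.sin (q.1 * x / b) * Real.cos (q.2 * y) : ℝ) : ℂ))
    (p : ℝ → ℝ → ℂ)
    (hp : ∀ x y, p x y = (1 / 2) * deriv (fun x' => ν x' y) x
        - (Complex.I / 2) * deriv (fun y' => ν x y') y) :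
    ∀ x y, (1 / 2) * (deriv (fun x' => p x' y) x + Complex.I * deriv (fun y' => p x y') y)
      = -(Complex.I / 4) * ((deriv (fun y' => α x y') y : ℝ) : ℂ) := by
  intro x y
  have hν' x y : ν x y = ∑ q ∈ S,
      (-Complex.I * (q.2 : ℝ) / ((q.2 : ℝ) ^ 2 + ((q.1 : ℝ) / b) ^ 2)) *
        trigMode (q.1 / b) q.2 (-a₂ q) (a₁ q) (-a₄ q) (a₃ q) x y := by
    refine (hν x y).trans (Finset.sum_congr rfl fun q _ => ?_)
    simp only [trigMode, mul_div_right_comm _ x]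
    push_cast
    ring
  have hα' : HasDerivAt (fun y' => α x y')
      (∑ q ∈ S, (q.2 : ℝ) * trigMode (q.1 / b) q.2 (a₂ q) (-a₁ q) (a₄ q) (-a₃ q) x y) y := by
    simp only [hα, mul_div_right_comm _ x]
    exact HasDerivAt.fun_sum fun q _ =>
      hasDerivAt_trigMode_y (q.1 / b) q.2 (a₁ q) (a₂ q) (a₃ q) (a₄ q) x y
  rw [dbar_dz_sum_trigMode S _ (fun q => q.1 / b) (fun q => q.2) _ _ _ _ hν' hp, hα'.deriv,
    Complex.ofReal_sum, Finset.mul_sum, Finset.mul_sum]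
  refine Finset.sum_congr rfl fun q _ => ?_
  have key := ofReal_div_sq_add_sq_mul q.2 (q.1 / b)
  have hG := trigMode_neg (q.1 / b) q.2 (-a₂ q) (a₁ q) (-a₄ q) (a₃ q) x y
  rw [neg_neg, neg_neg] at hG
  rw [hG]
  push_cast at key ⊢
  linear_combination (Complex.I / 4 * trigMode (q.1 / b) q.2 (-a₂ q) (a₁ q) (-a₄ q) (a₃ q) x y) * key

/-- The explicit Fourier-mode solution p = (1/2)∂ν/∂x − (i/2)∂ν/∂y
of the equation ∂̄p = −(i/4)·∂α/∂y on the torus, for α a trigonometric polynomial. -/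
theorem dbar_equation_solution
    (b : ℝ) (hb : 0 < b)
    (S : Finset (ℕ × ℕ)) (hS : ∀ q ∈ S, 1 ≤ q.2)
    (a₁ a₂ a₃ a₄ : ℕ × ℕ → ℝ)
    (α : ℝ → ℝ → ℝ)
    (hα : ∀ x y, α x y = ∑ q ∈ S,
      (a₁ q * Real.cos (q.1 * x / b) * Real.cos (q.2 * y)
        + a₂ q * Real.cos (q.1 * x / b) * Real.sin (q.2 * y)
        + a₃ q * Real.sin (q.1 * x / b) * Real.cos (q.2 * y)
        + a₄ q * Real.sin (q.1 * x / b) * Real.sin (q.2 * y)))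
    (ν : ℝ → ℝ → ℂ)
    (hν : ∀ x y, ν x y = ∑ q ∈ S,
      (-Complex.I * (q.2 : ℝ) / ((q.2 : ℝ) ^ 2 + ((q.1 : ℝ) / b) ^ 2)) *
        ((a₁ q * Real.cos (q.1 * x / b) * Real.sin (q.2 * y)
          - a₂ q * Real.cos (q.1 * x / b) * Real.cos (q.2 * y)
          + a₃ q * Real.sin (q.1 * x / b) * Real.sin (q.2 * y)
          - a₄ q * Real.sin (q.1 * x / b) * Real.cos (q.2 * y) : ℝ) : ℂ))
    (p : ℝ → ℝ → ℂ)
    (hp : ∀ x y, p x y = (1 / 2) * deriv (fun x' => ν x' y) x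
        - (Complex.I / 2) * deriv (fun y' => ν x y') y) :
    ∀ x y, (1 / 2) * (deriv (fun x' => p x' y) x + Complex.I * deriv (fun y' => p x y') y)
      = -(Complex.I / 4) * ((deriv (fun y' => α x y') y : ℝ) : ℂ) :=
  dbar_equation_solution_general b S a₁ a₂ a₃ a₄ α hα ν hν p hp
end

section
/- Let b > 0 and let S be a finite set of pairs (m,k) of integers with m ≥ 1 and k ≥ 1, with real coefficients a₁(m,k), a₂(m,k), a₃(m,k), a₄(m,k) for (m,k) ∈ S. Define α(x,y) = Σ_{(m,k)∈S} [ a₁ cos(mx/b)cos(ky) + a₂ cos(mx/b)sin(ky) + a₃ sin(mx/b)cos(ky) + a₄ sin(mx/b)sin(ky) ], ν(x,y) = Σ_{(m,k)∈S} (−i·k/(k² + (m/b)²))·[ a₁ cos(mx/b)sin(ky) − a₂ cos(mx/b)cos(ky) + a₃ sin(mx/b)sin(ky) − a₄ sin(mx/b)cos(ky) ], and p = (1/2)·∂ν/∂x − (i/2)·∂ν/∂y. Then Re ∫₀^{2πb} ∫₀^{2π} (1/2)·α(x,y)·p(x,y) dy dx = −(π²·b/4)·Σ_{(m,k)∈S}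 ( k²/(k² + (m/b)²) )·( a₁² + a₂² + a₃² + a₄² ); in particular this quantity is ≤ 0. -/
open Real intervalIntegral

/-!
Write `ν = -i Σ r_q N_q` with real `N_q` (`nuTerm`) and `r_q = k / (k² + (m/b)²)` (`nuWeight`).
Since `∂_y N_q = k A_q`, where `A_q` (`alphaTerm`) is the `q`-summand of `α`, and `∂_x ν` is purely
imaginary, `Re (α p / 2) = -(1/4) α Σ w_q A_q` with `w_q = k r_q = k² / (k² + (m/b)²)`. The products
`cos/sin (m x / b) · cos/sin (k y)` with `m, k ≥ 1` are orthogonal on `[0, 2πb] × [0, 2π]` with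
squared norm `π² b`, so the integral is `-(π² b / 4) Σ w_q |a_q|²`.
-/

noncomputable def trigBasis : Fin 2 → ℝ → ℝ := ![cos, sin]

@[fun_prop]
theorem continuous_trigBasis (i : Fin 2) : Continuous (trigBasis i) := by
  fin_cases i
  exacts [continuous_cos, continuous_sin]

theorem integral_cos_int_mul (n : ℤ) :
    ∫ t in (0:ℝ)..2 * π, cos (n * t) = if n = 0 then 2 * π else 0 := by
  split_ifs with hn
  · simp [hn]
  · have hn' : (n : ℝ) ≠ 0 := Int.cast_ne_zero.mpr hn
    rw [integral_comp_mul_left (fun t => cos t) hn', integral_cos, mul_zero, sin_zero,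
      show (n : ℝ) * (2 * π) = (2 * n : ℤ) * π by push_cast; ring, sin_int_mul_pi]
    simp

theorem integral_sin_int_mul (n : ℤ) :
    ∫ t in (0:ℝ)..2 * π, sin (n * t) = 0 := by
  rcases eq_or_ne n 0 with hn | hn
  · simp [hn]
  · have hn' : (n : ℝ) ≠ 0 := Int.cast_ne_zero.mpr hn
    rw [integral_comp_mul_left (fun t => sin t) hn', integral_sin, mul_zero, cos_zero,
      cos_int_mul_two_pi]
    simp

theorem integral_sin_int_mul_mul_cos_int_mul (m n : ℤ) :
    ∫ t in (0:ℝ)..2 * π, sin (m * t) * cos (n * t) = 0 := by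
  have e : ∀ t : ℝ, sin (m * t) * cos (n * t) =
      (sin (((m - n : ℤ) : ℝ) * t) + sin (((m + n : ℤ) : ℝ) * t)) / 2 := fun t => by
    push_cast
    rw [sub_mul, add_mul, ← two_mul_sin_mul_cos]
    ring
  simp_rw [e]
  rw [integral_div, integral_add (Continuous.intervalIntegrable (by fun_prop) _ _)
    (Continuous.intervalIntegrable (by fun_prop) _ _), integral_sin_int_mul, integral_sin_int_mul]
  norm_num

theorem integral_cos_nat_mul_mul_cos_nat_mul (m n : ℕ) (hn : n ≠ 0) :
    ∫ t in (0:ℝ)..2 * π, cos (m * t) * cos (n * t) = if m = n then π else 0 := by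
  have e : ∀ t : ℝ, cos (m * t) * cos (n * t) =
      (cos (((m - n : ℤ) : ℝ) * t) + cos (((m + n : ℤ) : ℝ) * t)) / 2 := fun t => by
    push_cast
    rw [sub_mul, add_mul, ← two_mul_cos_mul_cos]
    ring
  simp_rw [e]
  rw [integral_div, integral_add (Continuous.intervalIntegrable (by fun_prop) _ _)
    (Continuous.intervalIntegrable (by fun_prop) _ _), integral_cos_int_mul, integral_cos_int_mul,
    if_neg (show (m + n : ℤ) ≠ 0 by omega)]
  simp only [sub_eq_zero, Nat.cast_inj]
  split_ifs <;> ring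

theorem integral_sin_nat_mul_mul_sin_nat_mul (m n : ℕ) (hn : n ≠ 0) :
    ∫ t in (0:ℝ)..2 * π, sin (m * t) * sin (n * t) = if m = n then π else 0 := by
  have e : ∀ t : ℝ, sin (m * t) * sin (n * t) =
      (cos (((m - n : ℤ) : ℝ) * t) - cos (((m + n : ℤ) : ℝ) * t)) / 2 := fun t => by
    push_cast
    rw [sub_mul, add_mul, ← two_mul_sin_mul_sin]
    ring
  simp_rw [e]
  rw [integral_div, integral_sub (Continuous.intervalIntegrable (by fun_prop) _ _)
    (Continuous.intervalIntegrable (by fun_prop) _ _), integral_cos_int_mul, integral_cos_int_mul,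
    if_neg (show (m + n : ℤ) ≠ 0 by omega)]
  simp only [sub_eq_zero, Nat.cast_inj]
  split_ifs <;> ring

theorem integral_trigBasis_mul_trigBasis (i j : Fin 2) (m n : ℕ) (hn : n ≠ 0) :
    ∫ t in (0:ℝ)..2 * π, trigBasis i (m * t) * trigBasis j (n * t) =
      if i = j ∧ m = n then π else 0 := by
  fin_cases i <;> fin_cases j <;> simp only [trigBasis, Fin.zero_eta, Fin.mk_one,
    Matrix.cons_val_zero, Matrix.cons_val_one, Matrix.cons_val_fin_one, true_and]
  · exact integral_cos_nat_mul_mul_cos_nat_mul m n hn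
  · simp_rw [mul_comm (cos _)]
    exact_mod_cast integral_sin_int_mul_mul_cos_int_mul n m
  · exact_mod_cast integral_sin_int_mul_mul_cos_int_mul m n
  · exact integral_sin_nat_mul_mul_sin_nat_mul m n hn

theorem integral_trigBasis_mul_trigBasis_div {b : ℝ} (hb : b ≠ 0) (i j : Fin 2) (m n : ℕ)
    (hn : n ≠ 0) :
    ∫ x in (0:ℝ)..2 * π * b, trigBasis i (m * x / b) * trigBasis j (n * x / b) =
      if i = j ∧ m = n then π * b else 0 := by
  simp_rw [mul_div_assoc]
  rw [integral_comp_div (fun t => trigBasis i (m * t) * trigBasis j (n * t)) hb, zero_div,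
    mul_div_cancel_right₀ _ hb, integral_trigBasis_mul_trigBasis i j m n hn, smul_eq_mul]
  split_ifs <;> ring

section DoubleIntegral

variable {a b c d : ℝ}

theorem integral_integral_finset_sum {ι E : Type*} [NormedAddCommGroup E] [NormedSpace ℝ E]
    (s : Finset ι) (f : ι → ℝ → ℝ → E) (hf : ∀ i ∈ s, Continuous (Function.uncurry (f i))) :
    ∫ x in a..b, ∫ y in c..d, ∑ i ∈ s, f i x y = ∑ i ∈ s, ∫ x in a..b, ∫ y in c..d, f i x y := by
  have hy : ∀ x, ∫ y in c..d, ∑ i ∈ s, f i x y = ∑ i ∈ s, ∫ y in c..d, f i x y := fun x =>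
    integral_finsetSum fun i hi =>
      ((hf i hi).comp (Continuous.prodMk_right x)).intervalIntegrable _ _
  simp_rw [hy]
  exact integral_finsetSum fun i hi =>
    (continuous_parametric_intervalIntegral_of_continuous' (hf i hi) c d).intervalIntegrable _ _

theorem integral_integral_sum_mul_sum_of_orthogonal {ι : Type*} [DecidableEq ι] (s : Finset ι)
    (f : ι → ℝ → ℝ → ℝ) (hf : ∀ i ∈ s, Continuous (Function.uncurry (f i))) {C : ℝ}
    (horth : ∀ i ∈ s, ∀ j ∈ s,
      ∫ x in a..b, ∫ y in c..d, f i x y * f j x y = if i = j then C else 0)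
    (u v : ι → ℝ) :
    ∫ x in a..b, ∫ y in c..d, (∑ i ∈ s, u i * f i x y) * (∑ j ∈ s, v j * f j x y) =
      C * ∑ i ∈ s, u i * v i := by
  have e : ∀ x y, (∑ i ∈ s, u i * f i x y) * (∑ j ∈ s, v j * f j x y) =
      ∑ ij ∈ s ×ˢ s, u ij.1 * v ij.2 * (f ij.1 x y * f ij.2 x y) := fun x y => by
    rw [Finset.sum_mul_sum, Finset.sum_product]
    exact Finset.sum_congr rfl fun i _ => Finset.sum_congr rfl fun j _ => by ring
  simp_rw [e]
  rw [integral_integral_finset_sum _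
    (fun (ij : ι × ι) x y => u ij.1 * v ij.2 * (f ij.1 x y * f ij.2 x y)) fun ij hij => by
      obtain ⟨hi, hj⟩ := Finset.mem_product.1 hij
      exact continuous_const.mul ((hf _ hi).mul (hf _ hj))]
  simp_rw [integral_const_mul]
  rw [Finset.sum_product, Finset.mul_sum]
  refine Finset.sum_congr rfl fun i hi => ?_
  rw [Finset.sum_congr rfl fun j hj => by rw [horth i hi j hj]]
  simp [hi, mul_comm]

theorem ContinuousLinearMap.integral_integral_comp_comm {E F : Type*} [NormedAddCommGroup E]
    [NormedSpace ℝ E] [CompleteSpace E] [NormedAddCommGroup F] [NormedSpace ℝ F] [CompleteSpace F]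
    (L : E →L[ℝ] F) {G : ℝ → ℝ → E} (hG : Continuous (Function.uncurry G)) :
    ∫ x in a..b, ∫ y in c..d, L (G x y) = L (∫ x in a..b, ∫ y in c..d, G x y) := by
  rw [← L.intervalIntegral_comp_comm
    ((continuous_parametric_intervalIntegral_of_continuous' hG c d).intervalIntegrable _ _)]
  exact integral_congr fun x _ =>
    L.intervalIntegral_comp_comm ((hG.comp (Continuous.prodMk_right x)).intervalIntegrable _ _)

end DoubleIntegral

noncomputable def torusMode (b : ℝ) (μ : (ℕ × ℕ) × Fin 2 × Fin 2) (x y : ℝ) : ℝ :=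
  trigBasis μ.2.1 (μ.1.1 * x / b) * trigBasis μ.2.2 (μ.1.2 * y)

@[fun_prop]
theorem continuous_torusMode (b : ℝ) (μ : (ℕ × ℕ) × Fin 2 × Fin 2) :
    Continuous (Function.uncurry (torusMode b μ)) := by
  unfold torusMode Function.uncurry; fun_prop

theorem integral_integral_torusMode_mul {b : ℝ} (hb : b ≠ 0) (μ ν : (ℕ × ℕ) × Fin 2 × Fin 2)
    (hν : ν.1.1 ≠ 0 ∧ ν.1.2 ≠ 0) :
    ∫ x in (0:ℝ)..2 * π * b, ∫ y in (0:ℝ)..2 * π, torusMode b μ x y * torusMode b ν x y =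
      if μ = ν then π ^ 2 * b else 0 := by
  obtain ⟨⟨m, k⟩, i, j⟩ := μ
  obtain ⟨⟨m', k'⟩, i', j'⟩ := ν
  have e : ∀ x y, torusMode b ((m, k), i, j) x y * torusMode b ((m', k'), i', j') x y =
      (trigBasis i (m * x / b) * trigBasis i' (m' * x / b)) *
        (trigBasis j (k * y) * trigBasis j' (k' * y)) := fun x y => by
    simp only [torusMode]; ring
  simp_rw [e, integral_const_mul, integral_mul_const,
    integral_trigBasis_mul_trigBasis_div hb _ _ _ _ hν.1,
    integral_trigBasis_mul_trigBasis _ _ _ _ hν.2, Prod.mk.injEq]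
  rw [ite_zero_mul_ite_zero]
  exact if_congr (by tauto) (by ring) rfl

section Modes

variable (b : ℝ) (a₁ a₂ a₃ a₄ : ℕ × ℕ → ℝ)

noncomputable def alphaTerm (q : ℕ × ℕ) (x y : ℝ) : ℝ :=
  a₁ q * cos (q.1 * x / b) * cos (q.2 * y) + a₂ q * cos (q.1 * x / b) * sin (q.2 * y)
    + a₃ q * sin (q.1 * x / b) * cos (q.2 * y) + a₄ q * sin (q.1 * x / b) * sin (q.2 * y)

noncomputable def nuTerm (q : ℕ × ℕ) (x y : ℝ) : ℝ :=
  a₁ q * cos (q.1 * x / b) * sin (q.2 * y) - a₂ q * cos (q.1 * x / b) * cos (q.2 * y)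
    + a₃ q * sin (q.1 * x / b) * sin (q.2 * y) - a₄ q * sin (q.1 * x / b) * cos (q.2 * y)

@[fun_prop]
theorem continuous_alphaTerm (q : ℕ × ℕ) :
    Continuous (Function.uncurry (alphaTerm b a₁ a₂ a₃ a₄ q)) := by
  unfold alphaTerm Function.uncurry; fun_prop

@[fun_prop]
theorem continuous_nuTerm (q : ℕ × ℕ) :
    Continuous (Function.uncurry (nuTerm b a₁ a₂ a₃ a₄ q)) := by
  unfold nuTerm Function.uncurry; fun_prop

theorem hasDerivAt_nuTerm_fst (q : ℕ × ℕ) (x y : ℝ) :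
    HasDerivAt (fun x => nuTerm b a₁ a₂ a₃ a₄ q x y)
      (q.1 / b * nuTerm b a₃ a₄ (-a₁) (-a₂) q x y) x := by
  have hlin := ((hasDerivAt_id x).const_mul (q.1 : ℝ)).div_const b
  have hc := hlin.cos
  have hs := hlin.sin
  unfold nuTerm
  exact ((((hc.const_mul (a₁ q)).mul_const _).sub ((hc.const_mul (a₂ q)).mul_const _)).add
    ((hs.const_mul (a₃ q)).mul_const _) |>.sub ((hs.const_mul (a₄ q)).mul_const _)).congr_deriv
    (by simp only [id, Pi.neg_apply]; ring)

theorem hasDerivAt_nuTerm_snd (q : ℕ × ℕ) (x y : ℝ) :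
    HasDerivAt (fun y => nuTerm b a₁ a₂ a₃ a₄ q x y) (q.2 * alphaTerm b a₁ a₂ a₃ a₄ q x y) y := by
  have hlin := (hasDerivAt_id y).const_mul (q.2 : ℝ)
  have hc := hlin.cos
  have hs := hlin.sin
  unfold nuTerm alphaTerm
  exact ((((hs.const_mul _).sub (hc.const_mul _)).add (hs.const_mul _)).sub
    (hc.const_mul _)).congr_deriv (by simp only [id]; ring)

theorem alphaTerm_eq_sum_torusMode (q : ℕ × ℕ) (x y : ℝ) :
    alphaTerm b a₁ a₂ a₃ a₄ q x y =
      ∑ ij : Fin 2 × Fin 2, !![a₁ q, a₂ q; a₃ q, a₄ q] ij.1 ij.2 * torusMode b (q, ij) x y := by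
  simp only [alphaTerm, torusMode, trigBasis, Matrix.of_apply, Matrix.cons_val',
    Matrix.cons_val_fin_one, Fintype.sum_prod_type, Fin.sum_univ_two, Matrix.cons_val_zero,
    Matrix.cons_val_one]
  ring

noncomputable def nuWeight (q : ℕ × ℕ) : ℝ := q.2 / (q.2 ^ 2 + (q.1 / b) ^ 2)

theorem sum_mul_ofReal_nuTerm_eq (S : Finset (ℕ × ℕ)) (x y : ℝ) :
    ∑ q ∈ S, (-Complex.I * (q.2 : ℝ) / ((q.2 : ℝ) ^ 2 + ((q.1 : ℝ) / b) ^ 2)) *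
        ((nuTerm b a₁ a₂ a₃ a₄ q x y : ℝ) : ℂ) =
      -Complex.I * ((∑ q ∈ S, nuWeight b q * nuTerm b a₁ a₂ a₃ a₄ q x y : ℝ) : ℂ) := by
  push_cast [nuWeight, Finset.mul_sum]
  exact Finset.sum_congr rfl fun q _ => by ring

theorem half_deriv_sub_half_I_deriv_eq_of_eq_sum_nuTerm {S : Finset (ℕ × ℕ)} {ν : ℝ → ℝ → ℂ}
    (hν : ∀ x y, ν x y =
      -Complex.I * ((∑ q ∈ S, nuWeight b q * nuTerm b a₁ a₂ a₃ a₄ q x y : ℝ) : ℂ)) (x y : ℝ) :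
    (1 / 2) * deriv (fun x' => ν x' y) x - (Complex.I / 2) * deriv (fun y' => ν x y') y =
      -(1 / 2) * (((∑ q ∈ S,
          q.2 ^ 2 / (q.2 ^ 2 + (q.1 / b) ^ 2) * alphaTerm b a₁ a₂ a₃ a₄ q x y : ℝ) : ℂ)
        + Complex.I * ((∑ q ∈ S,
          nuWeight b q * (q.1 / b * nuTerm b a₃ a₄ (-a₁) (-a₂) q x y) : ℝ) : ℂ)) := by
  have hx := HasDerivAt.fun_sum fun q (_ : q ∈ S) =>
    (hasDerivAt_nuTerm_fst b a₁ a₂ a₃ a₄ q x y).const_mul (nuWeight b q)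
  have hy : HasDerivAt (fun y => ∑ q ∈ S, nuWeight b q * nuTerm b a₁ a₂ a₃ a₄ q x y)
      (∑ q ∈ S, q.2 ^ 2 / (q.2 ^ 2 + (q.1 / b) ^ 2) * alphaTerm b a₁ a₂ a₃ a₄ q x y) y :=
    (HasDerivAt.fun_sum fun q _ =>
      (hasDerivAt_nuTerm_snd b a₁ a₂ a₃ a₄ q x y).const_mul (nuWeight b q)).congr_deriv
        (Finset.sum_congr rfl fun q _ => by unfold nuWeight; ring)
  simp only [hν, (hx.ofReal_comp.const_mul _).deriv, (hy.ofReal_comp.const_mul _).deriv]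
  linear_combination ((∑ q ∈ S,
    q.2 ^ 2 / (q.2 ^ 2 + (q.1 / b) ^ 2) * alphaTerm b a₁ a₂ a₃ a₄ q x y : ℝ) / 2 : ℂ) * Complex.I_sq

end Modes

theorem integral_integral_sum_alphaTerm_mul_sum_alphaTerm {b : ℝ} (hb : b ≠ 0)
    (a₁ a₂ a₃ a₄ : ℕ × ℕ → ℝ) {S : Finset (ℕ × ℕ)} (hS : ∀ q ∈ S, q.1 ≠ 0 ∧ q.2 ≠ 0)
    (w : ℕ × ℕ → ℝ) :
    ∫ x in (0:ℝ)..2 * π * b, ∫ y in (0:ℝ)..2 * π,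
      (∑ q ∈ S, alphaTerm b a₁ a₂ a₃ a₄ q x y) * (∑ q ∈ S, w q * alphaTerm b a₁ a₂ a₃ a₄ q x y) =
      π ^ 2 * b * ∑ q ∈ S, w q * (a₁ q ^ 2 + a₂ q ^ 2 + a₃ q ^ 2 + a₄ q ^ 2) := by
  set A : (ℕ × ℕ) × Fin 2 × Fin 2 → ℝ := fun μ => !![a₁ μ.1, a₂ μ.1; a₃ μ.1, a₄ μ.1] μ.2.1 μ.2.2
  have hexp : ∀ (v : ℕ × ℕ → ℝ) x y, ∑ q ∈ S, v q * alphaTerm b a₁ a₂ a₃ a₄ q x y =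
      ∑ μ ∈ S ×ˢ Finset.univ, v μ.1 * A μ * torusMode b μ x y := fun v x y => by
    simp_rw [Finset.sum_product, alphaTerm_eq_sum_torusMode, Finset.mul_sum, mul_assoc]
    rfl
  have hexp₁ : ∀ x y, ∑ q ∈ S, alphaTerm b a₁ a₂ a₃ a₄ q x y =
      ∑ μ ∈ S ×ˢ Finset.univ, A μ * torusMode b μ x y := fun x y => by
    simpa using hexp 1 x y
  simp_rw [hexp₁, hexp w]
  rw [integral_integral_sum_mul_sum_of_orthogonal _ _ (fun μ _ => continuous_torusMode b μ)
    fun μ _ ν hν => integral_integral_torusMode_mul hb μ ν (hS ν.1 (Finset.mem_product.1 hν).1),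
    Finset.sum_product]
  congr 1
  refine Finset.sum_congr rfl fun q _ => ?_
  simp only [A, Matrix.of_apply, Matrix.cons_val', Matrix.cons_val_fin_one, Fintype.sum_prod_type,
    Fin.sum_univ_two, Matrix.cons_val_zero, Matrix.cons_val_one]
  ring

/-- The nonlocal term Re ∫ (1/2)·α·p of the second variation of
the conformal class has the explicit negative-semidefinite Fourier expression
−(π²b/4)·Σ k²/(k² + (m/b)²)·(a₁² + a₂² + a₃² + a₄²). -/
theorem nonlocal_term_fourier_expression
    (b : ℝ) (hb : 0 < b)
    (S : Finset (ℕ × ℕ)) (hS : ∀ q ∈ S, 1 ≤ q.1 ∧ 1 ≤ q.2)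
    (a₁ a₂ a₃ a₄ : ℕ × ℕ → ℝ)
    (α : ℝ → ℝ → ℝ)
    (hα : ∀ x y, α x y = ∑ q ∈ S,
      (a₁ q * Real.cos (q.1 * x / b) * Real.cos (q.2 * y)
        + a₂ q * Real.cos (q.1 * x / b) * Real.sin (q.2 * y)
        + a₃ q * Real.sin (q.1 * x / b) * Real.cos (q.2 * y)
        + a₄ q * Real.sin (q.1 * x / b) * Real.sin (q.2 * y)))
    (ν : ℝ → ℝ → ℂ)
    (hν : ∀ x y, ν x y = ∑ q ∈ S,
      (-Complex.I * (q.2 : ℝ) / ((q.2 : ℝ) ^ 2 + ((q.1 : ℝ) / b) ^ 2)) *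
        ((a₁ q * Real.cos (q.1 * x / b) * Real.sin (q.2 * y)
          - a₂ q * Real.cos (q.1 * x / b) * Real.cos (q.2 * y)
          + a₃ q * Real.sin (q.1 * x / b) * Real.sin (q.2 * y)
          - a₄ q * Real.sin (q.1 * x / b) * Real.cos (q.2 * y) : ℝ) : ℂ))
    (p : ℝ → ℝ → ℂ)
    (hp : ∀ x y, p x y = (1 / 2) * deriv (fun x' => ν x' y) x
        - (Complex.I / 2) * deriv (fun y' => ν x y') y) :
    (∫ x in (0:ℝ)..(2 * π * b), ∫ y in (0:ℝ)..(2 * π),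
        ((1 / 2 : ℂ) * ((α x y : ℝ) : ℂ) * p x y)).re
      = -(π ^ 2 * b / 4) * ∑ q ∈ S,
          ((q.2 : ℝ) ^ 2 / ((q.2 : ℝ) ^ 2 + ((q.1 : ℝ) / b) ^ 2)) *
            ((a₁ q) ^ 2 + (a₂ q) ^ 2 + (a₃ q) ^ 2 + (a₄ q) ^ 2) ∧
    (∫ x in (0:ℝ)..(2 * π * b), ∫ y in (0:ℝ)..(2 * π),
        ((1 / 2 : ℂ) * ((α x y : ℝ) : ℂ) * p x y)).re ≤ 0 := by
  have hα' : ∀ x y, α x y = ∑ q ∈ S, alphaTerm b a₁ a₂ a₃ a₄ q x y := hα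
  have hν' : ∀ x y, ν x y =
      -Complex.I * ((∑ q ∈ S, nuWeight b q * nuTerm b a₁ a₂ a₃ a₄ q x y : ℝ) : ℂ) :=
    fun x y => (hν x y).trans (sum_mul_ofReal_nuTerm_eq b a₁ a₂ a₃ a₄ S x y)
  have hF : ∀ x y, (1 / 2 : ℂ) * ((α x y : ℝ) : ℂ) * p x y =
      ((-(1 / 4) * ∑ q ∈ S, alphaTerm b a₁ a₂ a₃ a₄ q x y : ℝ) : ℂ) *
        (((∑ q ∈ S, q.2 ^ 2 / (q.2 ^ 2 + (q.1 / b) ^ 2) * alphaTerm b a₁ a₂ a₃ a₄ q x y : ℝ) : ℂ)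
          + Complex.I * ((∑ q ∈ S,
            nuWeight b q * (q.1 / b * nuTerm b a₃ a₄ (-a₁) (-a₂) q x y) : ℝ) : ℂ)) := fun x y => by
    rw [hp, half_deriv_sub_half_I_deriv_eq_of_eq_sum_nuTerm b a₁ a₂ a₃ a₄ hν', hα']
    push_cast
    ring
  have hcont :
      Continuous (Function.uncurry fun x y => (1 / 2 : ℂ) * ((α x y : ℝ) : ℂ) * p x y) := by
    simp only [hF]
    fun_prop
  have key : (∫ x in (0:ℝ)..(2 * π * b), ∫ y in (0:ℝ)..(2 * π),
        ((1 / 2 : ℂ) * ((α x y : ℝ) : ℂ) * p x y)).re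
      = -(π ^ 2 * b / 4) * ∑ q ∈ S,
          ((q.2 : ℝ) ^ 2 / ((q.2 : ℝ) ^ 2 + ((q.1 : ℝ) / b) ^ 2)) *
            ((a₁ q) ^ 2 + (a₂ q) ^ 2 + (a₃ q) ^ 2 + (a₄ q) ^ 2) := by
    rw [← Complex.reCLM_apply, ← Complex.reCLM.integral_integral_comp_comm hcont]
    simp_rw [Complex.reCLM_apply, hF, Complex.re_ofReal_mul, Complex.add_re, Complex.ofReal_re,
      Complex.I_mul_re, Complex.ofReal_im, neg_zero, add_zero, mul_assoc (-(1 / 4) : ℝ),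
      integral_const_mul, integral_integral_sum_alphaTerm_mul_sum_alphaTerm hb.ne' a₁ a₂ a₃ a₄
        fun q hq => (hS q hq).imp Nat.one_le_iff_ne_zero.1 Nat.one_le_iff_ne_zero.1]
    ring
  exact ⟨key, key ▸ mul_nonpos_of_nonpos_of_nonneg (neg_nonpos.2 (by positivity))
    (Finset.sum_nonneg fun q _ => by positivity)⟩
end

section
/- Let b > 0, β > 0, and let κ : ℝ → ℝ be a continuous 2πb-periodic function with κ(x)² < 4 + 4β for all x. Let φ : ℝ² → ℝ be a smooth function which is 2πb-periodic in x and 2π-periodic in y and satisfies ∫₀^{2π} φ(x,y)·cos(y) dy = 0 and ∫₀^{2π} φ(x,y)·sin(y) dy = 0 for every x ∈ ℝ. Then ∫₀^{2πb} ∫₀^{2π} [ (κ(x)²/8 + 1/2 − β/2)·∂²φ/∂y² + (1/4)·∂⁴φ/∂y⁴ + (1/2)·∂⁴φ/∂x²∂y² ](x,y) · φ(x,y) dy dx ≥ 0. -/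
open Real intervalIntegral

noncomputable section
namespace S13
open MeasureTheory Set Function Complex
open scoped ContDiff


lemma periodic_deriv' {E : Type*} [NormedAddCommGroup E] [NormedSpace ℝ E]
    (f : ℝ → E) {T : ℝ} (h : Function.Periodic f T) : Function.Periodic (deriv f) T := by
  intro x
  have : (fun y => f (y + T)) = f := funext h
  calc deriv f (x + T) = deriv (fun y => f (y + T)) x := (deriv_comp_add_const f T x).symm
  _ = deriv f x := by rw [this]

lemma cd_deriv {f : ℝ → ℝ} (h : ContDiff ℝ ∞ f) : ContDiff ℝ ∞ (deriv f) :=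
  (contDiff_infty_iff_deriv.mp h).2

/-- integration by parts with vanishing boundary -/
lemma ibp {u v : ℝ → ℝ} (hu : ContDiff ℝ ∞ u) (hv : ContDiff ℝ ∞ v) {a b : ℝ}
    (hbd : u b * v b = u a * v a) :
    ∫ t in a..b, deriv u t * v t = - ∫ t in a..b, u t * deriv v t := by
  have h1 : ∫ t in a..b, (deriv u t * v t + u t * deriv v t) = u b * v b - u a * v a :=
    integral_deriv_mul_eq_sub (fun t _ => (hu.differentiable (by simp) t).hasDerivAt)
      (fun t _ => (hv.differentiable (by simp) t).hasDerivAt)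
      ((cd_deriv hu).continuous.intervalIntegrable a b)
      ((cd_deriv hv).continuous.intervalIntegrable a b)
  have h2 : ∫ t in a..b, (deriv u t * v t + u t * deriv v t)
      = (∫ t in a..b, deriv u t * v t) + ∫ t in a..b, u t * deriv v t :=
    integral_add (((cd_deriv hu).continuous.mul hv.continuous).intervalIntegrable a b)
      ((hu.continuous.mul (cd_deriv hv).continuous).intervalIntegrable a b)
  rw [h2, hbd, sub_self] at h1
  linarith

/-! ### partial derivatives for functions on ℝ × ℝ -/

def Dv (w : ℝ × ℝ) (F : ℝ × ℝ → ℝ) : ℝ × ℝ → ℝ := fun p => fderiv ℝ F p w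

lemma Dv_contDiff {F : ℝ × ℝ → ℝ} (hF : ContDiff ℝ ∞ F) (w : ℝ × ℝ) :
    ContDiff ℝ ∞ (Dv w F) :=
  (hF.fderiv_right (by simp)).clm_apply contDiff_const

lemma hasDerivAt_sliceY {F : ℝ × ℝ → ℝ} (hF : ContDiff ℝ ∞ F) (x y : ℝ) :
    HasDerivAt (fun y' => F (x, y')) (Dv (0,1) F (x, y)) y := by
  exact (hF.differentiable (by simp) (x,y)).hasFDerivAt.comp_hasDerivAt y
    ((hasDerivAt_const y x).prodMk (hasDerivAt_id y))

lemma hasDerivAt_sliceX {F : ℝ × ℝ → ℝ} (hF : ContDiff ℝ ∞ F) (x y : ℝ) :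
    HasDerivAt (fun x' => F (x', y)) (Dv (1,0) F (x, y)) x := by
  exact (hF.differentiable (by simp) (x,y)).hasFDerivAt.comp_hasDerivAt x
    ((hasDerivAt_id x).prodMk (hasDerivAt_const x y))

lemma deriv_sliceY {F : ℝ × ℝ → ℝ} (hF : ContDiff ℝ ∞ F) (x : ℝ) :
    deriv (fun y' => F (x, y')) = fun y => Dv (0,1) F (x, y) :=
  funext fun y => (hasDerivAt_sliceY hF x y).deriv

lemma deriv_sliceX {F : ℝ × ℝ → ℝ} (hF : ContDiff ℝ ∞ F) (y : ℝ) :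
    deriv (fun x' => F (x', y)) = fun x => Dv (1,0) F (x, y) :=
  funext fun x => (hasDerivAt_sliceX hF x y).deriv

/-- second derivatives commute -/
lemma Dv_swap {F : ℝ × ℝ → ℝ} (hF : ContDiff ℝ ∞ F) (v w : ℝ × ℝ) :
    Dv w (Dv v F) = Dv v (Dv w F) := by
  funext p
  have hA : ContDiff ℝ ∞ (fun q => fderiv ℝ F q) := hF.fderiv_right (by simp)
  have hAp : HasFDerivAt (fun q => fderiv ℝ F q) (fderiv ℝ (fderiv ℝ F) p) p :=
    (hA.differentiable (by simp) p).hasFDerivAt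
  have key : ∀ u : ℝ × ℝ, HasFDerivAt (Dv u F)
      ((ContinuousLinearMap.apply ℝ ℝ u).comp (fderiv ℝ (fderiv ℝ F) p)) p := by
    intro u
    exact (ContinuousLinearMap.apply ℝ ℝ u).hasFDerivAt.comp p hAp
  have hsymm : ∀ r s : ℝ × ℝ, fderiv ℝ (fderiv ℝ F) p r s = fderiv ℝ (fderiv ℝ F) p s r :=
    second_derivative_symmetric (fun q => (hF.differentiable (by simp) q).hasFDerivAt) hAp
  show fderiv ℝ (Dv v F) p w = fderiv ℝ (Dv w F) p v
  rw [(key v).fderiv, (key w).fderiv]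
  exact hsymm w v

/-- translation invariance passes to fderiv applications -/
lemma Dv_periodic {F : ℝ × ℝ → ℝ} (hF : ContDiff ℝ ∞ F) {c : ℝ × ℝ}
    (h : ∀ p, F (p + c) = F p) (w : ℝ × ℝ) : ∀ p, Dv w F (p + c) = Dv w F p := by
  intro p
  have hg : HasFDerivAt (fun q : ℝ × ℝ => q + c) (ContinuousLinearMap.id ℝ (ℝ × ℝ)) p := by
    simpa using (hasFDerivAt_id p).add_const c
  have hcomp : HasFDerivAt (fun q => F (q + c))
      ((fderiv ℝ F (p + c)).comp (ContinuousLinearMap.id ℝ (ℝ × ℝ))) p :=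
    (hF.differentiable (by simp) (p + c)).hasFDerivAt.comp p hg
  have : (fun q => F (q + c)) = F := funext h
  rw [this] at hcomp
  have := hcomp.fderiv
  show fderiv ℝ F (p + c) w = fderiv ℝ F p w
  rw [this]; rfl



lemma tpp : (0:ℝ) < 2 * π := by positivity

instance : Fact ((0:ℝ) < 2 * π) := ⟨tpp⟩

/-- lifting a genuinely periodic function agrees with it everywhere -/
lemma liftIco_eq {u : ℝ → ℂ} (hper : Function.Periodic u (2*π)) (y : ℝ) :
    AddCircle.liftIco (2*π) 0 u (y : AddCircle (2*π)) = u y := by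
  set z := toIcoMod tpp 0 y with hz
  have hmem : z ∈ Ico (0:ℝ) (0 + 2*π) := toIcoMod_mem_Ico tpp 0 y
  have hz2 : z = y - toIcoDiv tpp 0 y • (2*π) := rfl
  have hcoe : (z : AddCircle (2*π)) = (y : AddCircle (2*π)) := by
    rw [hz2]
    have : ((toIcoDiv tpp 0 y • (2*π) : ℝ) : AddCircle (2*π)) = 0 := by
      rw [zsmul_eq_mul]
      push_cast
      simp [AddCircle.coe_period]
    rw [QuotientAddGroup.mk_sub, this, sub_zero]
  have hval : u z = u y := by
    rw [hz2]
    exact hper.sub_zsmul_eq _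
  rw [← hcoe, AddCircle.liftIco_coe_apply hmem, hval]


open ContinuousMap

/-- Fourier coefficient of a `2π`-periodic function -/
def fc (u : ℝ → ℂ) (n : ℤ) : ℂ := fourierCoeff (AddCircle.liftIco (2*π) 0 u) n

lemma fc_deriv (u u' : ℝ → ℂ) (hu : ∀ y, HasDerivAt u (u' y) y) (hc' : Continuous u')
    (hper : Function.Periodic u (2*π)) (hper' : Function.Periodic u' (2*π)) (n : ℤ) :
    fc u' n = I * n * fc u n := by
  rcases eq_or_ne n 0 with rfl | hn
  · have h0 : fc u' 0 = (1 / (2*π) : ℝ) • ∫ y in (0:ℝ)..(2*π),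
        fourier (-(0:ℤ)) (y : AddCircle (2*π)) • u' y := by
      rw [fc, fourierCoeff_eq_intervalIntegral _ 0 0, zero_add]
      congr 1
      refine intervalIntegral.integral_congr fun y _ => ?_
      rw [liftIco_eq hper']
    have hint : ∫ y in (0:ℝ)..(2*π), u' y = 0 := by
      rw [intervalIntegral.integral_eq_sub_of_hasDerivAt (fun y _ => hu y)
        (hc'.intervalIntegrable _ _)]
      have := hper 0
      rw [zero_add] at this
      rw [this, sub_self]
    simp only [neg_zero, fourier_zero, one_smul] at h0
    rw [h0, hint, smul_zero]
    simp
  · have key := fourierCoeffOn_of_hasDerivAt (lt_add_of_pos_right 0 tpp) hn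
      (fun y _ => hu y) (hc'.intervalIntegrable _ _)
    have hlift : fc u n = fourierCoeffOn (lt_add_of_pos_right 0 tpp) u n :=
      fourierCoeff_liftIco_eq u n
    have hlift' : fc u' n = fourierCoeffOn (lt_add_of_pos_right 0 tpp) u' n :=
      fourierCoeff_liftIco_eq u' n
    have hbd : u (0 + 2*π) - u 0 = 0 := by rw [hper 0, sub_self]
    rw [hbd, mul_zero, zero_sub] at key
    rw [hlift, hlift', key]
    have h2π : ((2*π:ℝ):ℂ) ≠ 0 := by
      simp only [ne_eq, ofReal_eq_zero]; positivity
    have hn' : (n:ℂ) ≠ 0 := Int.cast_ne_zero.mpr hn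
    have hI : (I:ℂ) ≠ 0 := I_ne_zero
    have hπ : (π:ℂ) ≠ 0 := ofReal_ne_zero.mpr pi_ne_zero
    push_cast
    field_simp
    ring

lemma parseval (u : ℝ → ℂ) (hc : Continuous u) (hper : Function.Periodic u (2*π)) :
    Summable (fun n : ℤ => ‖fc u n‖^2) ∧
    (∑' n : ℤ, ‖fc u n‖^2) = (1/(2*π)) * ∫ y in (0:ℝ)..(2*π), ‖u y‖^2 := by
  have hend : u 0 = u (0 + 2*π) := (hper 0).symm
  let U : C(AddCircle (2*π), ℂ) :=
    ⟨AddCircle.liftIco (2*π) 0 u, AddCircle.liftIco_continuous hend hc.continuousOn⟩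
  have hUcoe : ∀ y : ℝ, U (y : AddCircle (2*π)) = u y := fun y => liftIco_eq hper y
  have hfcU : ∀ n, fourierCoeff (⇑U) n = fc u n := fun n => rfl
  set f := ContinuousMap.toLp (p := 2) (μ := AddCircle.haarAddCircle) (𝕜 := ℂ) (E := ℂ) U with hf
  have hcoeff : ∀ n, fourierCoeff (⇑f) n = fc u n := fun n => by
    rw [fourierCoeff_toLp, hfcU]
  have hP := tsum_sq_fourierCoeff f
  have hRHS : ∫ t : AddCircle (2*π), ‖f t‖^2 ∂AddCircle.haarAddCircle
      = ∫ t : AddCircle (2*π), ‖U t‖^2 ∂AddCircle.haarAddCircle := by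
    refine integral_congr_ae ?_
    filter_upwards [ContinuousMap.coeFn_toLp (p := 2) (μ := AddCircle.haarAddCircle) (𝕜 := ℂ) U] with t ht
    rw [ht]
  have hvol : ∫ y in (0:ℝ)..(0 + 2*π), ‖U (y : AddCircle (2*π))‖^2
      = ∫ t : AddCircle (2*π), ‖U t‖^2 ∂(volume) :=
    AddCircle.intervalIntegral_preimage (2*π) 0 (fun t => ‖U t‖^2)
  have hsmul : ∫ t : AddCircle (2*π), ‖U t‖^2 ∂(volume)
      = (2*π) * ∫ t : AddCircle (2*π), ‖U t‖^2 ∂AddCircle.haarAddCircle := by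
    rw [AddCircle.volume_eq_smul_haarAddCircle, MeasureTheory.integral_smul_measure, ENNReal.toReal_ofReal tpp.le,
      smul_eq_mul]
  have hIntEq : ∫ y in (0:ℝ)..(0 + 2*π), ‖U (y : AddCircle (2*π))‖^2
      = ∫ y in (0:ℝ)..(2*π), ‖u y‖^2 := by
    rw [zero_add]
    exact intervalIntegral.integral_congr fun y _ => by rw [hUcoe]
  have hsummable : Summable (fun n : ℤ => ‖fc u n‖^2) := by
    have hm : Memℓp (⇑(fourierBasis.repr f)) 2 := lp.memℓp (fourierBasis.repr f)
    have hs := (memℓp_gen_iff (p := 2) (by norm_num)).mp hm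
    have : ∀ n : ℤ, ‖(fourierBasis.repr f) n‖ ^ (2:ENNReal).toReal = ‖fc u n‖^2 := by
      intro n
      rw [fourierBasis_repr, hcoeff]
      rw [show ((2:ENNReal)).toReal = ((2:ℕ):ℝ) by norm_num, Real.rpow_natCast]
    exact (summable_congr this).mp hs
  refine ⟨hsummable, ?_⟩
  have : (∑' n : ℤ, ‖fc u n‖^2) = ∫ t : AddCircle (2*π), ‖U t‖^2 ∂AddCircle.haarAddCircle := by
    rw [← hRHS, ← hP]
    exact tsum_congr fun n => by rw [hcoeff]
  rw [this]
  rw [← hIntEq, hvol, hsmul]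
  field_simp



lemma fc_eq {u : ℝ → ℂ} (hper : Function.Periodic u (2*π)) (n : ℤ) :
    fc u n = (1/(2*π) : ℝ) • ∫ y in (0:ℝ)..(2*π),
      (fourier (-n) (y : AddCircle (2*π)) : ℂ) * u y := by
  rw [fc, fourierCoeff_eq_intervalIntegral _ n 0, zero_add]
  congr 1
  refine intervalIntegral.integral_congr fun y _ => ?_
  rw [liftIco_eq hper, smul_eq_mul]

lemma fc_one_eq_zero {g : ℝ → ℝ} (hg : Continuous g)
    (hper : Function.Periodic (fun y => (g y : ℂ)) (2*π))
    (hc : ∫ y in (0:ℝ)..(2*π), g y * Real.cos y = 0)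
    (hs : ∫ y in (0:ℝ)..(2*π), g y * Real.sin y = 0) (n : ℤ) (hn : n = 1 ∨ n = -1) :
    fc (fun y => (g y : ℂ)) n = 0 := by
  rw [fc_eq hper]
  have key : ∫ y in (0:ℝ)..(2*π), (fourier (-n) (y : AddCircle (2*π)) : ℂ) * (g y : ℂ) = 0 := by
    have hint : ∀ y : ℝ, (fourier (-n) (y : AddCircle (2*π)) : ℂ) * (g y:ℂ)
        = ((g y * Real.cos y : ℝ) : ℂ) + (-n : ℂ) * I * ((g y * Real.sin y : ℝ) : ℂ) := by
      intro y
      rw [fourier_coe_apply]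
      have harg : 2 * ↑π * I * ↑(-n) * ↑y / ↑(2 * π) = (((-n : ℤ) * y : ℝ) : ℂ) * I := by
        have h2 : ((2*π : ℝ):ℂ) ≠ 0 := by
          simp only [ne_eq, ofReal_eq_zero]
          positivity
        rw [div_eq_iff h2]
        push_cast
        ring
      rw [harg, exp_mul_I, ← Complex.ofReal_cos, ← Complex.ofReal_sin]
      rcases hn with rfl | rfl
      · push_cast [neg_mul, one_mul, Real.cos_neg, Real.sin_neg]
        ring
      · push_cast [neg_mul, one_mul, Real.cos_neg, Real.sin_neg]
        ring
    rw [intervalIntegral.integral_congr (fun y _ => hint y)]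
    rw [intervalIntegral.integral_add, intervalIntegral.integral_const_mul]
    · rw [intervalIntegral.integral_ofReal, intervalIntegral.integral_ofReal, hc, hs]
      simp
    · exact (Continuous.intervalIntegrable (by continuity) _ _)
    · exact (Continuous.intervalIntegrable (by continuity) _ _)
  rw [key, smul_zero]

lemma wirtinger {g : ℝ → ℝ} (hg : ContDiff ℝ ∞ g) (hper : Function.Periodic g (2*π))
    (hc : ∫ y in (0:ℝ)..(2*π), g y * Real.cos y = 0)
    (hs : ∫ y in (0:ℝ)..(2*π), g y * Real.sin y = 0) :
    4 * ∫ y in (0:ℝ)..(2*π), (deriv g y)^2 ≤ ∫ y in (0:ℝ)..(2*π), (deriv (deriv g) y)^2 := by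
  set g1 := deriv g with hg1d
  set g2 := deriv g1 with hg2d
  have hg1 : ContDiff ℝ ∞ g1 := cd_deriv hg
  have hg2 : ContDiff ℝ ∞ g2 := cd_deriv hg1
  have hper1 : Function.Periodic g1 (2*π) := periodic_deriv' g hper
  have hper2 : Function.Periodic g2 (2*π) := periodic_deriv' g1 hper1
  set G : ℝ → ℂ := fun y => (g y : ℂ) with hG
  set G1 : ℝ → ℂ := fun y => (g1 y : ℂ) with hG1
  set G2 : ℝ → ℂ := fun y => (g2 y : ℂ) with hG2
  have hperG : Function.Periodic G (2*π) := fun y => by simp [hG, hper y]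
  have hperG1 : Function.Periodic G1 (2*π) := fun y => by simp [hG1, hper1 y]
  have hperG2 : Function.Periodic G2 (2*π) := fun y => by simp [hG2, hper2 y]
  have hDG : ∀ y, HasDerivAt G (G1 y) y := fun y =>
    ((hg.differentiable (by simp) y).hasDerivAt).ofReal_comp
  have hDG1 : ∀ y, HasDerivAt G1 (G2 y) y := fun y =>
    ((hg1.differentiable (by simp) y).hasDerivAt).ofReal_comp
  have hcG1 : Continuous G1 := continuous_ofReal.comp hg1.continuous
  have hcG2 : Continuous G2 := continuous_ofReal.comp hg2.continuous
  have hrel1 : ∀ n : ℤ, fc G1 n = I * n * fc G n :=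
    fc_deriv G G1 hDG hcG1 hperG hperG1
  have hrel2 : ∀ n : ℤ, fc G2 n = I * n * fc G1 n :=
    fc_deriv G1 G2 hDG1 hcG2 hperG1 hperG2
  have hzero : ∀ n : ℤ, n = 0 ∨ n = 1 ∨ n = -1 → fc G1 n = 0 := by
    intro n hn
    rcases hn with rfl | hn
    · rw [hrel1]; simp
    · rw [hrel1, fc_one_eq_zero hg.continuous hperG hc hs n hn, mul_zero]
  obtain ⟨S1, E1⟩ := parseval G1 hcG1 hperG1
  obtain ⟨S2, E2⟩ := parseval G2 hcG2 hperG2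
  have hpt : ∀ n : ℤ, 4 * ‖fc G1 n‖^2 ≤ ‖fc G2 n‖^2 := by
    intro n
    by_cases hn : n = 0 ∨ n = 1 ∨ n = -1
    · rw [hzero n hn]; simp
    · push_neg at hn
      have h2 : (2:ℝ) ≤ |(n:ℝ)| := by
        have hz : (2:ℤ) ≤ |n| := by
          rcases le_or_gt 0 n with h | h
          · rw [abs_of_nonneg h]; omega
          · rw [abs_of_neg h]; omega
        calc (2:ℝ) = ((2:ℤ):ℝ) := by norm_num
        _ ≤ ((|n|:ℤ):ℝ) := by exact_mod_cast hz
        _ = |(n:ℝ)| := Int.cast_abs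
      have hnorm : ‖fc G2 n‖ = |(n:ℝ)| * ‖fc G1 n‖ := by
        rw [hrel2, norm_mul, norm_mul, Complex.norm_I, one_mul]
        congr 1
        simpa using Complex.abs_intCast n
      rw [hnorm, mul_pow]
      have h0 : (0:ℝ) ≤ ‖fc G1 n‖^2 := by positivity
      have h4 : (4:ℝ) ≤ |(n:ℝ)|^2 := by nlinarith
      exact mul_le_mul_of_nonneg_right h4 h0
  have hsum : 4 * ∑' n : ℤ, ‖fc G1 n‖^2 ≤ ∑' n : ℤ, ‖fc G2 n‖^2 := by
    rw [← tsum_mul_left]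
    exact Summable.tsum_le_tsum hpt (S1.mul_left 4) S2
  rw [E1, E2] at hsum
  have hchg1 : (∫ y in (0:ℝ)..(2*π), ‖G1 y‖^2) = ∫ y in (0:ℝ)..(2*π), (deriv g y)^2 := by
    refine intervalIntegral.integral_congr fun y _ => ?_
    rw [hG1]
    simp [Complex.norm_real, _root_.sq_abs]
    rfl
  have hchg2 : (∫ y in (0:ℝ)..(2*π), ‖G2 y‖^2) = ∫ y in (0:ℝ)..(2*π), (deriv (deriv g) y)^2 := by
    refine intervalIntegral.integral_congr fun y _ => ?_
    rw [hG2]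
    simp [Complex.norm_real, _root_.sq_abs]
    rfl
  rw [hchg1, hchg2] at hsum
  have hπ : (0:ℝ) < 1/(2*π) := by positivity
  refine le_of_mul_le_mul_left ?_ hπ
  linarith



lemma period_bd {f : ℝ → ℝ} {T : ℝ} (h : Function.Periodic f T) : f T = f 0 := by
  have := h 0
  rwa [zero_add] at this

lemma slice_nonneg {g : ℝ → ℝ} (hg : ContDiff ℝ ∞ g) (hper : Function.Periodic g (2*π))
    (hco : ∫ y in (0:ℝ)..(2*π), g y * Real.cos y = 0)
    (hsi : ∫ y in (0:ℝ)..(2*π), g y * Real.sin y = 0) {c : ℝ} (hc1 : c ≤ 1) :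
    0 ≤ ∫ y in (0:ℝ)..(2*π),
      (c * deriv (deriv g) y + (1/4) * deriv (deriv (deriv (deriv g))) y) * g y := by
  set g1 := deriv g
  set g2 := deriv g1
  set g3 := deriv g2
  set g4 := deriv g3
  have hg1 : ContDiff ℝ ∞ g1 := cd_deriv hg
  have hg2 : ContDiff ℝ ∞ g2 := cd_deriv hg1
  have hg3 : ContDiff ℝ ∞ g3 := cd_deriv hg2
  have hg4 : ContDiff ℝ ∞ g4 := cd_deriv hg3
  have hp1 : Function.Periodic g1 (2*π) := periodic_deriv' g hper
  have hp2 : Function.Periodic g2 (2*π) := periodic_deriv' g1 hp1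
  have hp3 : Function.Periodic g3 (2*π) := periodic_deriv' g2 hp2
  have I1 : ∫ y in (0:ℝ)..(2*π), g2 y * g y = - ∫ y in (0:ℝ)..(2*π), g1 y * g1 y :=
    ibp hg1 hg (by rw [period_bd hp1, period_bd hper])
  have I2a : ∫ y in (0:ℝ)..(2*π), g4 y * g y = - ∫ y in (0:ℝ)..(2*π), g3 y * g1 y :=
    ibp hg3 hg (by rw [period_bd hp3, period_bd hper])
  have I2b : ∫ y in (0:ℝ)..(2*π), g3 y * g1 y = - ∫ y in (0:ℝ)..(2*π), g2 y * g2 y :=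
    ibp hg2 hg1 (by rw [period_bd hp2, period_bd hp1])
  have hW := wirtinger hg hper hco hsi
  have hsplit : ∫ y in (0:ℝ)..(2*π), (c * g2 y + (1/4) * g4 y) * g y
      = c * (∫ y in (0:ℝ)..(2*π), g2 y * g y) + (1/4) * ∫ y in (0:ℝ)..(2*π), g4 y * g y := by
    rw [← intervalIntegral.integral_const_mul, ← intervalIntegral.integral_const_mul,
      ← intervalIntegral.integral_add (f := fun y => c * (g2 y * g y)) (g := fun y => 1/4 * (g4 y * g y))
        ((continuous_const.mul (hg2.continuous.mul hg.continuous)).intervalIntegrable _ _)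
        ((continuous_const.mul (hg4.continuous.mul hg.continuous)).intervalIntegrable _ _)]
    refine intervalIntegral.integral_congr fun y _ => ?_
    ring
  have hsq1 : (∫ y in (0:ℝ)..(2*π), g1 y * g1 y) = ∫ y in (0:ℝ)..(2*π), (g1 y)^2 :=
    intervalIntegral.integral_congr fun y _ => (sq (g1 y)).symm
  have hsq2 : (∫ y in (0:ℝ)..(2*π), g2 y * g2 y) = ∫ y in (0:ℝ)..(2*π), (g2 y)^2 :=
    intervalIntegral.integral_congr fun y _ => (sq (g2 y)).symm
  have hpos : 0 ≤ ∫ y in (0:ℝ)..(2*π), (g1 y)^2 :=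
    intervalIntegral.integral_nonneg tpp.le fun y _ => sq_nonneg _
  rw [hsplit, I1, I2a, I2b, hsq1, neg_neg, hsq2]
  nlinarith [hW, hpos]

lemma fubini {f : ℝ → ℝ → ℝ} (hf : Continuous (uncurry f)) {a b c d : ℝ}
    (hab : a ≤ b) (hcd : c ≤ d) :
    ∫ x in a..b, ∫ y in c..d, f x y = ∫ y in c..d, ∫ x in a..b, f x y := by
  simp only [intervalIntegral.integral_of_le hab, intervalIntegral.integral_of_le hcd]
  apply MeasureTheory.integral_integral_swap
  rw [Measure.prod_restrict]
  have h1 : IntegrableOn (uncurry f) (Icc a b ×ˢ Icc c d) (volume.prod volume) :=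
    hf.continuousOn.integrableOn_compact (isCompact_Icc.prod isCompact_Icc)
  exact h1.mono_set (Set.prod_mono Ioc_subset_Icc_self Ioc_subset_Icc_self)


end S13
end

namespace S13

lemma per_y {G : ℝ × ℝ → ℝ} (h : ∀ p, G (p + ((0:ℝ), 2*π)) = G p) (x y : ℝ) :
    G (x, y + 2*π) = G (x, y) := by
  have := h (x, y)
  simpa using this

lemma per_x {G : ℝ × ℝ → ℝ} {L : ℝ} (h : ∀ p, G (p + (L, (0:ℝ))) = G p) (x y : ℝ) :
    G (x + L, y) = G (x, y) := by
  have := h (x, y)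
  simpa using this

end S13

open S13 Set Function MeasureTheory
open scoped ContDiff

/-- Positive semidefiniteness of the local part Q̃ of the second
variation operator on functions φ orthogonal to the first Fourier modes in y,
under the pointwise curvature bound κ² < 4 + 4β. -/
theorem local_operator_positive_semidefinite
    (b : ℝ) (hb : 0 < b) (β : ℝ) (hβ : 0 < β)
    (κ : ℝ → ℝ) (hκcont : Continuous κ) (hκper : Function.Periodic κ (2 * π * b))
    (hκbound : ∀ x, (κ x) ^ 2 < 4 + 4 * β)
    (φ : ℝ → ℝ → ℝ)
    (hφ : ContDiff ℝ (⊤ : ℕ∞) (fun p : ℝ × ℝ => φ p.1 p.2))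
    (hφperx : ∀ x y, φ (x + 2 * π * b) y = φ x y)
    (hφpery : ∀ x y, φ x (y + 2 * π) = φ x y)
    (hcos : ∀ x, ∫ y in (0:ℝ)..(2 * π), φ x y * Real.cos y = 0)
    (hsin : ∀ x, ∫ y in (0:ℝ)..(2 * π), φ x y * Real.sin y = 0) :
    0 ≤ ∫ x in (0:ℝ)..(2 * π * b), ∫ y in (0:ℝ)..(2 * π),
        (((κ x) ^ 2 / 8 + 1 / 2 - β / 2) * deriv (deriv (φ x)) y
          + (1 / 4) * deriv (deriv (deriv (deriv (φ x)))) y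
          + (1 / 2) * deriv (deriv (fun x' => deriv (deriv (φ x')) y)) x) * φ x y := by
  have hL : (0:ℝ) ≤ 2 * π * b := by positivity
  set L : ℝ := 2 * π * b with hLdef
  set F : ℝ × ℝ → ℝ := fun p => φ p.1 p.2 with hFdef
  have hF : ContDiff ℝ ∞ F := hφ.of_le (by simp)
  set Y1 : ℝ × ℝ → ℝ := Dv (0,1) F with hY1def
  set Y2 : ℝ × ℝ → ℝ := Dv (0,1) Y1 with hY2def
  set Y3 : ℝ × ℝ → ℝ := Dv (0,1) Y2 with hY3def
  set Y4 : ℝ × ℝ → ℝ := Dv (0,1) Y3 with hY4def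
  set X1 : ℝ × ℝ → ℝ := Dv (1,0) F with hX1def
  set W : ℝ × ℝ → ℝ := Dv (0,1) X1 with hWdef
  set XY2 : ℝ × ℝ → ℝ := Dv (1,0) Y2 with hXY2def
  set XXY2 : ℝ × ℝ → ℝ := Dv (1,0) XY2 with hXXY2def
  have hY1 : ContDiff ℝ ∞ Y1 := Dv_contDiff hF _
  have hY2 : ContDiff ℝ ∞ Y2 := Dv_contDiff hY1 _
  have hY3 : ContDiff ℝ ∞ Y3 := Dv_contDiff hY2 _
  have hY4 : ContDiff ℝ ∞ Y4 := Dv_contDiff hY3 _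
  have hX1 : ContDiff ℝ ∞ X1 := Dv_contDiff hF _
  have hW : ContDiff ℝ ∞ W := Dv_contDiff hX1 _
  have hXY2 : ContDiff ℝ ∞ XY2 := Dv_contDiff hY2 _
  have hXXY2 : ContDiff ℝ ∞ XXY2 := Dv_contDiff hXY2 _
  -- periodicity
  have hFpy : ∀ p, F (p + ((0:ℝ), 2*π)) = F p := by
    intro p
    show φ (p.1 + 0) (p.2 + 2 * π) = φ p.1 p.2
    rw [add_zero, hφpery]
  have hFpx : ∀ p, F (p + (L, (0:ℝ))) = F p := by
    intro p
    show φ (p.1 + L) (p.2 + 0) = φ p.1 p.2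
    rw [add_zero, hLdef, hφperx]
  have hY1py : ∀ p, Y1 (p + ((0:ℝ), 2*π)) = Y1 p := Dv_periodic hF hFpy _
  have hY2py : ∀ p, Y2 (p + ((0:ℝ), 2*π)) = Y2 p := Dv_periodic hY1 hY1py _
  have hX1py : ∀ p, X1 (p + ((0:ℝ), 2*π)) = X1 p := Dv_periodic hF hFpy _
  have hWpy : ∀ p, W (p + ((0:ℝ), 2*π)) = W p := Dv_periodic hX1 hX1py _
  have hY1px : ∀ p, Y1 (p + (L, (0:ℝ))) = Y1 p := Dv_periodic hF hFpx _
  have hY2px : ∀ p, Y2 (p + (L, (0:ℝ))) = Y2 p := Dv_periodic hY1 hY1px _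
  have hXY2px : ∀ p, XY2 (p + (L, (0:ℝ))) = XY2 p := Dv_periodic hY2 hY2px _
  -- slices
  have hslice : ∀ x : ℝ, ContDiff ℝ ∞ (φ x) := fun x =>
    hF.comp ((contDiff_const (c := x)).prodMk contDiff_id)
  have hd1 : ∀ x, deriv (φ x) = fun y => Y1 (x, y) := fun x => deriv_sliceY hF x
  have hd2 : ∀ x, deriv (deriv (φ x)) = fun y => Y2 (x, y) := fun x => by
    rw [hd1 x]; exact deriv_sliceY hY1 x
  have hd3 : ∀ x, deriv (deriv (deriv (φ x))) = fun y => Y3 (x, y) := fun x => by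
    rw [hd2 x]; exact deriv_sliceY hY2 x
  have hd4 : ∀ x, deriv (deriv (deriv (deriv (φ x)))) = fun y => Y4 (x, y) := fun x => by
    rw [hd3 x]; exact deriv_sliceY hY3 x
  have hinner : ∀ y, (fun x' => deriv (deriv (φ x')) y) = fun x' => Y2 (x', y) := fun y =>
    funext fun x' => by rw [hd2 x']
  have hdx1 : ∀ y, deriv (fun x' => deriv (deriv (φ x')) y) = fun x => XY2 (x, y) := fun y => by
    rw [hinner y]; exact deriv_sliceX hY2 y
  have hdx2 : ∀ x y, deriv (deriv (fun x' => deriv (deriv (φ x')) y)) x = XXY2 (x, y) :=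
    fun x y => by rw [hdx1 y]; exact congrFun (deriv_sliceX hXY2 y) x
  -- the coefficient
  set c : ℝ → ℝ := fun x => κ x ^ 2 / 8 + 1 / 2 - β / 2 with hcdef
  have hccont : Continuous c := by
    apply Continuous.sub
    · exact ((hκcont.pow 2).div_const 8).add continuous_const
    · exact continuous_const
  have hcle : ∀ x, c x ≤ 1 := fun x => by
    have := hκbound x
    rw [hcdef]
    simp only
    linarith
  -- integrand splitting
  have key : ∀ x y, (((κ x) ^ 2 / 8 + 1 / 2 - β / 2) * deriv (deriv (φ x)) y
          + (1 / 4) * deriv (deriv (deriv (deriv (φ x)))) y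
          + (1 / 2) * deriv (deriv (fun x' => deriv (deriv (φ x')) y)) x) * φ x y
      = (c x * deriv (deriv (φ x)) y
          + (1 / 4) * deriv (deriv (deriv (deriv (φ x)))) y) * φ x y
        + (1 / 2) * (XXY2 (x, y) * F (x, y)) := by
    intro x y
    rw [hdx2 x y]
    show _ = _ + (1/2) * (XXY2 (x,y) * φ x y)
    ring
  set A : ℝ → ℝ := fun x => ∫ y in (0:ℝ)..(2*π),
      (c x * deriv (deriv (φ x)) y + (1 / 4) * deriv (deriv (deriv (deriv (φ x)))) y) * φ x y
    with hAdef
  set B : ℝ → ℝ := fun x => ∫ y in (0:ℝ)..(2*π), XXY2 (x, y) * F (x, y) with hBdef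
  -- continuity facts
  have hcontF : Continuous F := hF.continuous
  have hsliceYc : ∀ {G : ℝ × ℝ → ℝ}, Continuous G → ∀ x : ℝ, Continuous fun y => G (x, y) :=
    fun hG x => hG.comp (continuous_const.prodMk continuous_id)
  have hsplit : ∀ x, (∫ y in (0:ℝ)..(2*π),
      (((κ x) ^ 2 / 8 + 1 / 2 - β / 2) * deriv (deriv (φ x)) y
          + (1 / 4) * deriv (deriv (deriv (deriv (φ x)))) y
          + (1 / 2) * deriv (deriv (fun x' => deriv (deriv (φ x')) y)) x) * φ x y)
      = A x + (1/2) * B x := by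
    intro x
    rw [intervalIntegral.integral_congr (fun y _ => key x y)]
    have hi1 : IntervalIntegrable (fun y => (c x * deriv (deriv (φ x)) y
        + (1 / 4) * deriv (deriv (deriv (deriv (φ x)))) y) * φ x y) volume 0 (2*π) := by
      apply Continuous.intervalIntegrable
      rw [hd4 x, hd2 x]
      exact (((continuous_const.mul (hsliceYc hY2.continuous x)).add
        (continuous_const.mul (hsliceYc hY4.continuous x))).mul (hsliceYc hcontF x))
    have hi2 : IntervalIntegrable (fun y => (1/2) * (XXY2 (x, y) * F (x, y))) volume 0 (2*π) := by
      apply Continuous.intervalIntegrable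
      exact continuous_const.mul ((hsliceYc hXXY2.continuous x).mul (hsliceYc hcontF x))
    rw [intervalIntegral.integral_add hi1 hi2, intervalIntegral.integral_const_mul]
  rw [intervalIntegral.integral_congr (fun x _ => hsplit x)]
  -- integrability of A and B in x
  have hAcont : Continuous A := by
    have : Continuous fun p : ℝ × ℝ => (c p.1 * Y2 p + (1/4) * Y4 p) * F p :=
      (((hccont.comp continuous_fst).mul hY2.continuous).add
        (continuous_const.mul hY4.continuous)).mul hcontF
    have hA2 : A = fun x => ∫ y in (0:ℝ)..(2*π), (c x * Y2 (x,y) + (1/4) * Y4 (x,y)) * F (x,y) := by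
      funext x
      rw [hAdef]
      simp only
      rw [hd4 x, hd2 x]
    rw [hA2]
    exact intervalIntegral.continuous_parametric_intervalIntegral_of_continuous'
      (f := fun x y => (c x * Y2 (x,y) + (1/4) * Y4 (x,y)) * F (x,y)) this 0 (2*π)
  have hBcont : Continuous B := by
    have : Continuous fun p : ℝ × ℝ => XXY2 p * F p := hXXY2.continuous.mul hcontF
    exact intervalIntegral.continuous_parametric_intervalIntegral_of_continuous'
      (f := fun x y => XXY2 (x,y) * F (x,y)) this 0 (2*π)
  rw [intervalIntegral.integral_add (g := fun x => 1/2 * B x) (hAcont.intervalIntegrable _ _)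
    ((continuous_const.mul hBcont).intervalIntegrable _ _),
    intervalIntegral.integral_const_mul]
  -- the A part is nonneg
  have hApos : 0 ≤ ∫ x in (0:ℝ)..L, A x := by
    refine intervalIntegral.integral_nonneg hL fun x _ => ?_
    exact slice_nonneg (hslice x) (fun y => hφpery x y) (hcos x) (hsin x) (hcle x)
  -- the B part
  have hBval : ∫ x in (0:ℝ)..L, B x = ∫ x in (0:ℝ)..L, ∫ y in (0:ℝ)..(2*π), W (x,y) * W (x,y) := by
    have hcont1 : Continuous (uncurry fun x y => XXY2 (x, y) * F (x, y)) :=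
      hXXY2.continuous.mul hcontF
    have hstepa : ∫ x in (0:ℝ)..L, B x
        = ∫ y in (0:ℝ)..(2*π), ∫ x in (0:ℝ)..L, XXY2 (x, y) * F (x, y) :=
      fubini hcont1 hL tpp.le
    have hstepb : ∀ y, ∫ x in (0:ℝ)..L, XXY2 (x, y) * F (x, y)
        = - ∫ x in (0:ℝ)..L, XY2 (x, y) * X1 (x, y) := by
      intro y
      have hu : ContDiff ℝ ∞ (fun x => XY2 (x, y)) :=
        hXY2.comp (contDiff_id.prodMk contDiff_const)
      have hv : ContDiff ℝ ∞ (fun x => F (x, y)) :=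
        hF.comp (contDiff_id.prodMk contDiff_const)
      have hbd : XY2 (L, y) * F (L, y) = XY2 (0, y) * F (0, y) := by
        have h1 := per_x hXY2px 0 y
        have h2 := per_x hFpx 0 y
        rw [zero_add] at h1 h2
        rw [h1, h2]
      have hibp := ibp hu hv hbd
      rw [deriv_sliceX hXY2 y, deriv_sliceX hF y] at hibp
      exact hibp
    have hstepd : ∀ x, ∫ y in (0:ℝ)..(2*π), XY2 (x, y) * X1 (x, y)
        = - ∫ y in (0:ℝ)..(2*π), W (x, y) * W (x, y) := by
      intro x
      have hswap : XY2 = Dv (0,1) W := by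
        rw [hXY2def, hY2def, Dv_swap hY1 (0,1) (1,0), hWdef, hX1def, hY1def,
          Dv_swap hF (0,1) (1,0)]
      have hu : ContDiff ℝ ∞ (fun y => W (x, y)) :=
        hW.comp (contDiff_const.prodMk contDiff_id)
      have hv : ContDiff ℝ ∞ (fun y => X1 (x, y)) :=
        hX1.comp (contDiff_const.prodMk contDiff_id)
      have hbd : W (x, 2*π) * X1 (x, 2*π) = W (x, 0) * X1 (x, 0) := by
        have h1 := per_y hWpy x 0
        have h2 := per_y hX1py x 0
        rw [zero_add] at h1 h2
        rw [h1, h2]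
      have hibp := ibp hu hv hbd
      rw [deriv_sliceY hW x, deriv_sliceY hX1 x] at hibp
      have : (fun y => XY2 (x, y)) = fun y => Dv (0,1) W (x, y) := by rw [hswap]
      calc (∫ y in (0:ℝ)..(2*π), XY2 (x, y) * X1 (x, y))
          = ∫ y in (0:ℝ)..(2*π), Dv (0,1) W (x, y) * X1 (x, y) := by
            refine intervalIntegral.integral_congr fun y _ => ?_
            rw [hswap]
        _ = - ∫ y in (0:ℝ)..(2*π), W (x, y) * W (x, y) := hibp
    have hcont2 : Continuous (uncurry fun x y => XY2 (x, y) * X1 (x, y)) :=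
      hXY2.continuous.mul hX1.continuous
    calc (∫ x in (0:ℝ)..L, B x)
        = ∫ y in (0:ℝ)..(2*π), ∫ x in (0:ℝ)..L, XXY2 (x, y) * F (x, y) := hstepa
      _ = ∫ y in (0:ℝ)..(2*π), - ∫ x in (0:ℝ)..L, XY2 (x, y) * X1 (x, y) :=
          intervalIntegral.integral_congr fun y _ => hstepb y
      _ = - ∫ y in (0:ℝ)..(2*π), ∫ x in (0:ℝ)..L, XY2 (x, y) * X1 (x, y) :=
          intervalIntegral.integral_neg
      _ = - ∫ x in (0:ℝ)..L, ∫ y in (0:ℝ)..(2*π), XY2 (x, y) * X1 (x, y) := by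
          rw [fubini hcont2 hL tpp.le]
      _ = - ∫ x in (0:ℝ)..L, - ∫ y in (0:ℝ)..(2*π), W (x, y) * W (x, y) := by
          rw [intervalIntegral.integral_congr fun x _ => hstepd x]
      _ = ∫ x in (0:ℝ)..L, ∫ y in (0:ℝ)..(2*π), W (x, y) * W (x, y) := by
          rw [intervalIntegral.integral_neg, neg_neg]
  have hBpos : 0 ≤ ∫ x in (0:ℝ)..L, B x := by
    rw [hBval]
    refine intervalIntegral.integral_nonneg hL fun x _ => ?_
    exact intervalIntegral.integral_nonneg tpp.le fun y _ => mul_self_nonneg _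
  linarith
end
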